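/- arXiv:2503.07842 — 3 statements merged into one kernel-verified Lean document; each statement's English description precedes it below -/
import Mathlib

section
/- Let (M,F) be a Berwaldian conic pseudo-Finsler surface anisotropically conformally changed to F̄ = e^{φ}F. If the Gauss curvature R of F is nowhere zero and φ_{;2} is horizontally constant, then F̄ is Berwaldian. -/
/-!
Common framework: conic pseudo-Finsler surfaces on an open conic subset
`A ⊆ M × (ℝ² ∖ {0})`, with modified Berwald frame, scalar derivatives,
and anisotropic conformal change `F̄ = e^φ F`.
-/

noncomputable section

open Real

/-- A point `(x, y)` of the (slit) tangent bundle of an open subset of `ℝ²`. -/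
abbrev Pt : Type := (Fin 2 → ℝ) × (Fin 2 → ℝ)

/-- Partial derivative in the base (`x`) direction `i`. -/
def pdx (f : Pt → ℝ) (i : Fin 2) (p : Pt) : ℝ :=
  fderiv ℝ f p (Pi.single i 1, (0 : Fin 2 → ℝ))

/-- Partial derivative in the fibre (`y`) direction `i`. -/
def pdy (f : Pt → ℝ) (i : Fin 2) (p : Pt) : ℝ :=
  fderiv ℝ f p ((0 : Fin 2 → ℝ), Pi.single i 1)

/-- `f_{;1} = y^i ∂f/∂y^i`. -/
def vd1 (f : Pt → ℝ) (p : Pt) : ℝ := ∑ i, p.2 i * pdy f i p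

/-- The family of spray coefficients `G` has vanishing Berwald curvature
`∂³G^i/∂y^j∂y^k∂y^r = 0` on `A` (Berwaldian). -/
def BerwaldFlat (A : Set Pt) (G : Fin 2 → Pt → ℝ) : Prop :=
  ∀ p ∈ A, ∀ i j k r : Fin 2, pdy (pdy (pdy (G i) j) k) r p = 0

/-- A conic pseudo-Finsler surface, equipped with a modified Berwald frame
`(ℓ, m)`, signature `ε = ±1`, geodesic spray coefficients `G^i` and the main
scalar `I`. -/
structure PFSurf where
  A : Set Pt
  openA : IsOpen A
  conicA : ∀ p ∈ A, ∀ t : ℝ, 0 < t → ((p.1, t • p.2) : Pt) ∈ A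
  F : Pt → ℝ
  smF : ContDiffOn ℝ (⊤ : ℕ∞) F A
  Fne : ∀ p ∈ A, F p ≠ 0
  homF : ∀ p ∈ A, ∀ t : ℝ, 0 < t → F (p.1, t • p.2) = t * F p
  eps : ℝ
  epspm : eps = 1 ∨ eps = -1
  mlow : Fin 2 → Pt → ℝ
  mup : Fin 2 → Pt → ℝ
  smml : ∀ i, ContDiffOn ℝ (⊤ : ℕ∞) (mlow i) A
  smmu : ∀ i, ContDiffOn ℝ (⊤ : ℕ∞) (mup i) A
  /-- the angular metric `h_{ij} = g_{ij} - ℓ_iℓ_j` equals `ε m_i m_j` -/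
  angular : ∀ p ∈ A, ∀ i j : Fin 2,
    (1/2) * pdy (pdy (fun q => (F q)^2) j) i p - pdy F i p * pdy F j p
      = eps * mlow i p * mlow j p
  /-- `ℓ^i m_i = 0` -/
  ellm : ∀ p ∈ A, (∑ i, (p.2 i / F p) * mlow i p) = 0
  /-- `m^i ℓ_i = 0` -/
  mell : ∀ p ∈ A, (∑ i, mup i p * pdy F i p) = 0
  /-- `m^i m_i = ε` -/
  mm : ∀ p ∈ A, (∑ i, mup i p * mlow i p) = eps
  /-- `m_i = g_{ij} m^j` -/
  mraise : ∀ p ∈ A, ∀ i : Fin 2,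
    mlow i p = ∑ j, ((1/2) * pdy (pdy (fun q => (F q)^2) j) i p) * mup j p
  /-- nondegeneracy of the metric tensor `g_{ij} = (1/2)∂²F²/∂y^i∂y^j` -/
  nondeg : ∀ p ∈ A,
    ((1/2) * pdy (pdy (fun q => (F q)^2) 0) 0 p) *
      ((1/2) * pdy (pdy (fun q => (F q)^2) 1) 1 p) -
      ((1/2) * pdy (pdy (fun q => (F q)^2) 1) 0 p)^2 ≠ 0
  Gs : Fin 2 → Pt → ℝ
  smG : ∀ i, ContDiffOn ℝ (⊤ : ℕ∞) (Gs i) A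
  homG : ∀ p ∈ A, ∀ t : ℝ, 0 < t → ∀ i, Gs i ((p.1, t • p.2) : Pt) = t^2 * Gs i p
  /-- `G^i = (1/4) g^{ij}(y^k ∂²F²/∂x^k∂y^j − ∂F²/∂x^j)`, in the equivalent
  lowered form `∑_j g_{ij}·4G^j = y^k ∂²F²/∂x^k∂y^i − ∂F²/∂x^i` -/
  sprayEq : ∀ p ∈ A, ∀ i : Fin 2,
    (∑ j, ((1/2) * pdy (pdy (fun q => (F q)^2) j) i p) * (4 * Gs j p))
      = (∑ k, p.2 k * pdx (pdy (fun q => (F q)^2) i) k p)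
        - pdx (fun q => (F q)^2) i p
  Iscal : Pt → ℝ
  smI : ContDiffOn ℝ (⊤ : ℕ∞) Iscal A
  /-- `F C_{ijk} = I m_i m_j m_k` with `C_{ijk} = (1/4)∂³F²/∂y^i∂y^j∂y^k` -/
  cartan : ∀ p ∈ A, ∀ i j k : Fin 2,
    F p * ((1/4) * pdy (pdy (pdy (fun q => (F q)^2) k) j) i p)
      = Iscal p * mlow i p * mlow j p * mlow k p

namespace PFSurf

variable (S : PFSurf)

/-- `ℓ^i = y^i / F`. -/
def ellUp (i : Fin 2) (p : Pt) : ℝ := p.2 i / S.F p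

/-- `ℓ_i = ∂F/∂y^i`. -/
def ellLow (i : Fin 2) (p : Pt) : ℝ := pdy S.F i p

/-- `f_{;2} = ε F (∂f/∂y^i) m^i`. -/
def vd2 (f : Pt → ℝ) (p : Pt) : ℝ := S.eps * S.F p * ∑ i, pdy f i p * S.mup i p

/-- `δ_i f = ∂f/∂x^i − G^j_i ∂f/∂y^j`. -/
def hdel (f : Pt → ℝ) (i : Fin 2) (p : Pt) : ℝ :=
  pdx f i p - ∑ j, pdy (S.Gs j) i p * pdy f j p

/-- `f_{,1} = ℓ^i δ_i f`. -/
def hd1 (f : Pt → ℝ) (p : Pt) : ℝ := ∑ i, S.ellUp i p * S.hdel f i p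

/-- `f_{,2} = ε m^i δ_i f`. -/
def hd2 (f : Pt → ℝ) (p : Pt) : ℝ := S.eps * ∑ i, S.mup i p * S.hdel f i p

/-- `f` is positively homogeneous of degree `0` in `y` on `A`. -/
def Homog0 (f : Pt → ℝ) : Prop :=
  ∀ p ∈ S.A, ∀ t : ℝ, 0 < t → f ((p.1, t • p.2) : Pt) = f p

/-- `f` is horizontally constant on `A`: `δ_i f = 0`. -/
def HorizConst (f : Pt → ℝ) : Prop := ∀ p ∈ S.A, ∀ i, S.hdel f i p = 0

end PFSurf

/-- An anisotropic conformal change `F̄ = e^φ F` of a conic pseudo-Finsler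
surface: `φ` is smooth, positively `0`-homogeneous in `y`, and satisfies the
regularity condition `F²(∂²φ/∂y^i∂y^j + ∂φ/∂y^i ∂φ/∂y^j)m^i m^j + ε ≠ 0`. -/
structure AnisoChange (S : PFSurf) where
  phi : Pt → ℝ
  smphi : ContDiffOn ℝ (⊤ : ℕ∞) phi S.A
  homphi : ∀ p ∈ S.A, ∀ t : ℝ, 0 < t → phi ((p.1, t • p.2) : Pt) = phi p
  reg : ∀ p ∈ S.A,
    (S.F p)^2 * (∑ i, ∑ j, (pdy (pdy phi j) i p + pdy phi i p * pdy phi j p)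
      * S.mup i p * S.mup j p) + S.eps ≠ 0

namespace AnisoChange

variable {S : PFSurf} (C : AnisoChange S)

/-- `σ = φ_{;2;2} + εIφ_{;2} + 2(φ_{;2})²`. -/
def sigma (p : Pt) : ℝ :=
  S.vd2 (S.vd2 C.phi) p + S.eps * S.Iscal p * S.vd2 C.phi p + 2 * (S.vd2 C.phi p)^2

/-- `ρ = 1/(σ + ε − (φ_{;2})²)`. -/
def rho (p : Pt) : ℝ := 1 / (C.sigma p + S.eps - (S.vd2 C.phi p)^2)

/-- The recurring combination `φ_{;2}φ_{,1} + φ_{,1;2} − 2φ_{,2}`. -/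
def qcore (p : Pt) : ℝ :=
  S.vd2 C.phi p * S.hd1 C.phi p + S.vd2 (S.hd1 C.phi) p - 2 * S.hd2 C.phi p

/-- `2Q = ερF²(φ_{;2}φ_{,1} + φ_{,1;2} − 2φ_{,2})`. -/
def Q (p : Pt) : ℝ := (1/2) * S.eps * C.rho p * (S.F p)^2 * C.qcore p

/-- `2P = −ρF²φ_{;2}(φ_{;2}φ_{,1} + φ_{,1;2} − 2φ_{,2}) + F²φ_{,1}`. -/
def P (p : Pt) : ℝ :=
  -(1/2) * C.rho p * (S.F p)^2 * S.vd2 C.phi p * C.qcore p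
    + (1/2) * (S.F p)^2 * S.hd1 C.phi p

/-- `F̄ = e^φ F`. -/
def Fbar (p : Pt) : ℝ := Real.exp (C.phi p) * S.F p

/-- `m̄^i = e^{−φ}√(ερ)(m^i − εφ_{;2}ℓ^i)`. -/
def mbarUp (i : Fin 2) (p : Pt) : ℝ :=
  Real.exp (-C.phi p) * Real.sqrt (S.eps * C.rho p)
    * (S.mup i p - S.eps * S.vd2 C.phi p * S.ellUp i p)

/-- The main scalar of `F̄`:
`Ī = √(ερ)(I + 2εφ_{;2} − (ε/2)(ln ρ)_{;2})`. -/
def Ibar (p : Pt) : ℝ :=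
  Real.sqrt (S.eps * C.rho p) *
    (S.Iscal p + 2 * S.eps * S.vd2 C.phi p
      - (S.eps / 2) * S.vd2 (fun q => Real.log (C.rho q)) p)

/-- The geodesic spray coefficients of `F̄`: `Ḡ^i = G^i + Q m^i + P ℓ^i`. -/
def Gbar (i : Fin 2) (p : Pt) : ℝ :=
  S.Gs i p + C.Q p * S.mup i p + C.P p * S.ellUp i p

/-- `δ̄_i f = ∂f/∂x^i − Ḡ^j_i ∂f/∂y^j`. -/
def hdelbar (f : Pt → ℝ) (i : Fin 2) (p : Pt) : ℝ :=
  pdx f i p - ∑ j, pdy (C.Gbar j) i p * pdy f j p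

/-- `f_{;a} = y^i ∂f/∂y^i` (with respect to `F̄`). -/
def va (_C : AnisoChange S) (f : Pt → ℝ) (p : Pt) : ℝ := ∑ i, p.2 i * pdy f i p

/-- `f_{;b} = ε F̄ (∂f/∂y^i) m̄^i`. -/
def vb (f : Pt → ℝ) (p : Pt) : ℝ :=
  S.eps * C.Fbar p * ∑ i, pdy f i p * C.mbarUp i p

/-- `f_{,a} = ℓ̄^i δ̄_i f`. -/
def ha (f : Pt → ℝ) (p : Pt) : ℝ := ∑ i, (p.2 i / C.Fbar p) * C.hdelbar f i p

/-- `f_{,b} = ε m̄^i δ̄_i f`. -/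
def hb (f : Pt → ℝ) (p : Pt) : ℝ := S.eps * ∑ i, C.mbarUp i p * C.hdelbar f i p

/-- `F̄` is Landsbergian: `Ī_{,a} = 0` on `A`. -/
def LandsbergBar : Prop := ∀ p ∈ S.A, C.ha C.Ibar p = 0

/-- `F̄` is Berwaldian (via the main scalar): `Ī_{,a} = Ī_{,b} = 0` on `A`. -/
def BerwaldBarScal : Prop :=
  ∀ p ∈ S.A, C.ha C.Ibar p = 0 ∧ C.hb C.Ibar p = 0

/-- `Ī_2 = Ī_{,a;b} + Ī_{,b}` (with respect to `F̄`). -/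
def I2bar (p : Pt) : ℝ := C.vb (C.ha C.Ibar) p + C.hb C.Ibar p

/-- `F̄` is of Douglas type: `6Ī_{,a} + εĪ_{2;b} + 2Ī·Ī_2 = 0` on `A`. -/
def DouglasBar : Prop :=
  ∀ p ∈ S.A,
    6 * C.ha C.Ibar p + S.eps * C.vb C.I2bar p + 2 * C.Ibar p * C.I2bar p = 0

/-- The candidate symmetric tensor `M^i_{jk}` of the paper. -/
def Mt (i j k : Fin 2) (p : Pt) : ℝ :=
  (1/(S.F p)^2) *
    (2 * (C.P p * S.ellUp i p + C.Q p * S.mup i p) * S.ellLow j p * S.ellLow k p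
      + ((S.vd2 C.P p - C.Q p) * S.ellUp i p
          + (S.eps * C.P p + S.vd2 C.Q p) * S.mup i p)
          * (S.ellLow j p * S.mlow k p + S.ellLow k p * S.mlow j p)
      + ((S.eps * C.P p + S.vd2 (S.vd2 C.P) p - 2 * S.vd2 C.Q p) * S.ellUp i p
          + (2 * S.eps * S.vd2 C.P p + S.eps * C.Q p + S.vd2 (S.vd2 C.Q) p)
            * S.mup i p)
          * S.mlow j p * S.mlow k p)

/-- The function `ψ` with
`F²ψ = (−3+I_{;2})εQ + (1+I_{;2}+2εI²)εP_{;2} + P_{;2;2;2} − 3Q_{;2;2}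
       + 3εI P_{;2;2} − 3εI Q_{;2} + 2IP`. -/
def psiF (p : Pt) : ℝ :=
  (1/(S.F p)^2) *
    ((-3 + S.vd2 S.Iscal p) * S.eps * C.Q p
      + (1 + S.vd2 S.Iscal p + 2 * S.eps * (S.Iscal p)^2) * S.eps * S.vd2 C.P p
      + S.vd2 (S.vd2 (S.vd2 C.P)) p - 3 * S.vd2 (S.vd2 C.Q) p
      + 3 * S.eps * S.Iscal p * S.vd2 (S.vd2 C.P) p
      - 3 * S.eps * S.Iscal p * S.vd2 C.Q p + 2 * S.Iscal p * C.P p)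

/-- The function `χ` with
`F²χ = 3P − (I+εI_{;2;2}+I·I_{;2})Q − (2εI_{;2}+I²−ε)Q_{;2} + 3εP_{;2;2}
       + Q_{;2;2;2} + 3I P_{;2}`. -/
def chiF (p : Pt) : ℝ :=
  (1/(S.F p)^2) *
    (3 * C.P p
      - (S.Iscal p + S.eps * S.vd2 (S.vd2 S.Iscal) p
          + S.Iscal p * S.vd2 S.Iscal p) * C.Q p
      - (2 * S.eps * S.vd2 S.Iscal p + (S.Iscal p)^2 - S.eps) * S.vd2 C.Q p
      + 3 * S.eps * S.vd2 (S.vd2 C.P) p + S.vd2 (S.vd2 (S.vd2 C.Q)) p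
      + 3 * S.Iscal p * S.vd2 C.P p)

end AnisoChange

lemma fderiv_eval_y (f : Pt → ℝ) (p : Pt) (v : Fin 2 → ℝ) :
    fderiv ℝ f p ((0 : Fin 2 → ℝ), v) = v 0 * pdy f 0 p + v 1 * pdy f 1 p := by
  have h : ((0 : Fin 2 → ℝ), v)
      = v 0 • ((0 : Fin 2 → ℝ), (Pi.single 0 1 : Fin 2 → ℝ))
        + v 1 • ((0 : Fin 2 → ℝ), (Pi.single 1 1 : Fin 2 → ℝ)) := by
    rw [Prod.ext_iff]
    constructor
    · simp
    · funext j; fin_cases j <;> simp [Pi.single_apply]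
  rw [h, map_add, map_smul, map_smul]
  simp [pdy, smul_eq_mul]

lemma pt_decomp (z : Pt) :
    z = z.1 0 • ((Pi.single 0 1 : Fin 2 → ℝ), (0 : Fin 2 → ℝ))
      + z.1 1 • ((Pi.single 1 1 : Fin 2 → ℝ), (0 : Fin 2 → ℝ))
      + z.2 0 • ((0 : Fin 2 → ℝ), (Pi.single 0 1 : Fin 2 → ℝ))
      + z.2 1 • ((0 : Fin 2 → ℝ), (Pi.single 1 1 : Fin 2 → ℝ)) := by
  rw [Prod.ext_iff]
  constructor <;> · funext j; fin_cases j <;> simp [Pi.single_apply]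

lemma fderiv_zero_of_locally_const {f : Pt → ℝ} {p : Pt} {U : Set Pt}
    (hU : IsOpen U) (hp : p ∈ U) {c : ℝ} (h : ∀ q ∈ U, f q = c) :
    fderiv ℝ f p = 0 := by
  have he : f =ᶠ[nhds p] fun _ => c := Filter.eventuallyEq_of_mem (hU.mem_nhds hp) h
  rw [he.fderiv_eq, fderiv_const_apply]

lemma fderiv_zero_of_partials {f : Pt → ℝ} {p : Pt}
    (hx : ∀ i, pdx f i p = 0) (hy : ∀ i, pdy f i p = 0) :
    fderiv ℝ f p = 0 := by
  apply ContinuousLinearMap.ext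
  intro z
  have e0 : fderiv ℝ f p ((Pi.single 0 1 : Fin 2 → ℝ), (0 : Fin 2 → ℝ)) = 0 := hx 0
  have e1 : fderiv ℝ f p ((Pi.single 1 1 : Fin 2 → ℝ), (0 : Fin 2 → ℝ)) = 0 := hx 1
  have e2 : fderiv ℝ f p ((0 : Fin 2 → ℝ), (Pi.single 0 1 : Fin 2 → ℝ)) = 0 := hy 0
  have e3 : fderiv ℝ f p ((0 : Fin 2 → ℝ), (Pi.single 1 1 : Fin 2 → ℝ)) = 0 := hy 1
  rw [pt_decomp z, map_add, map_add, map_add, map_smul, map_smul, map_smul, map_smul,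
    e0, e1, e2, e3]
  simp

lemma hasDerivAt_ray (p : Pt) :
    HasDerivAt (fun t : ℝ => ((p.1, t • p.2) : Pt)) (((0 : Fin 2 → ℝ), p.2)) 1 := by
  have h1 : HasDerivAt (fun _ : ℝ => p.1) 0 1 := hasDerivAt_const _ _
  have h2 : HasDerivAt (fun t : ℝ => t • p.2) ((1 : ℝ) • p.2) 1 :=
    (hasDerivAt_id 1).smul_const p.2
  simpa using h1.prodMk h2

lemma ray_fderiv {f : Pt → ℝ} {p : Pt} (hf : DifferentiableAt ℝ f p)
    {c : ℝ → ℝ} {c' : ℝ} (hc : HasDerivAt c c' 1)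
    (hhom : ∀ t : ℝ, 0 < t → f (p.1, t • p.2) = c t) :
    p.2 0 * pdy f 0 p + p.2 1 * pdy f 1 p = c' := by
  have hγ := hasDerivAt_ray p
  have hept : ((p.1, (1 : ℝ) • p.2) : Pt) = p := by simp
  have hf1 : HasFDerivAt f (fderiv ℝ f p) ((p.1, (1 : ℝ) • p.2)) := by
    rw [hept]; exact hf.hasFDerivAt
  have h1 : HasDerivAt (f ∘ fun t : ℝ => ((p.1, t • p.2) : Pt))
      (fderiv ℝ f p ((0 : Fin 2 → ℝ), p.2)) 1 := hf1.comp_hasDerivAt 1 hγ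
  have h2 : HasDerivAt (f ∘ fun t : ℝ => ((p.1, t • p.2) : Pt)) c' 1 := by
    refine hc.congr_of_eventuallyEq ?_
    filter_upwards [eventually_gt_nhds (zero_lt_one)] with t ht
    exact hhom t ht
  have h3 := h1.unique h2
  rw [← fderiv_eval_y f p p.2]
  exact h3

lemma pdy_scale {A : Set Pt} (hA : IsOpen A)
    {f : Pt → ℝ} (hdf : ∀ q ∈ A, DifferentiableAt ℝ f q)
    {t c : ℝ}
    (hmem : ∀ q ∈ A, ((q.1, t • q.2) : Pt) ∈ A)
    (hsc : ∀ q ∈ A, f (q.1, t • q.2) = c * f q) :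
    ∀ q ∈ A, ∀ i, t * pdy f i (q.1, t • q.2) = c * pdy f i q := by
  intro q hq i
  set Φ : Pt →L[ℝ] Pt :=
    (ContinuousLinearMap.fst ℝ (Fin 2 → ℝ) (Fin 2 → ℝ)).prod
      (t • ContinuousLinearMap.snd ℝ (Fin 2 → ℝ) (Fin 2 → ℝ)) with hΦdef
  have hΦap : ∀ z : Pt, Φ z = ((z.1, t • z.2) : Pt) := fun z => rfl
  have h1 : fderiv ℝ (f ∘ Φ) q = (fderiv ℝ f (Φ q)).comp Φ := by
    rw [fderiv_comp q (by rw [hΦap]; exact hdf _ (hmem q hq)) Φ.differentiableAt, Φ.fderiv]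
  have h2 : fderiv ℝ (f ∘ Φ) q = c • fderiv ℝ f q := by
    have he : (f ∘ Φ) =ᶠ[nhds q] fun z => c * f z :=
      Filter.eventuallyEq_of_mem (hA.mem_nhds hq) (fun z hz => hsc z hz)
    rw [he.fderiv_eq, fderiv_const_mul (hdf q hq) c]
  have h3 := congrArg (fun L : Pt →L[ℝ] ℝ => L ((0 : Fin 2 → ℝ), Pi.single i 1))
    (h1.symm.trans h2)
  simp only [ContinuousLinearMap.coe_comp', Function.comp_apply,
    ContinuousLinearMap.smul_apply] at h3
  have hv : (Φ ((0 : Fin 2 → ℝ), Pi.single i 1) : Pt)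
      = t • (((0 : Fin 2 → ℝ), Pi.single i 1) : Pt) := by
    rw [hΦap]
    rw [Prod.ext_iff]
    constructor <;> simp
  rw [hv, map_smul] at h3
  simp only [smul_eq_mul] at h3
  rw [hΦap q] at h3
  exact h3

lemma solve2 (a b w : Fin 2 → ℝ) (hdet : a 0 * b 1 - a 1 * b 0 ≠ 0)
    (h1 : a 0 * w 0 + a 1 * w 1 = 0) (h2 : b 0 * w 0 + b 1 * w 1 = 0) :
    w 0 = 0 ∧ w 1 = 0 := by
  constructor
  · have h : w 0 * (a 0 * b 1 - a 1 * b 0) = 0 := by linear_combination b 1 * h1 - a 1 * h2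
    exact (mul_eq_zero.mp h).resolve_right hdet
  · have h : w 1 * (a 0 * b 1 - a 1 * b 0) = 0 := by linear_combination a 0 * h2 - b 0 * h1
    exact (mul_eq_zero.mp h).resolve_right hdet

section AuxS
open Filter Metric

variable (S : PFSurf)

lemma PFSurf.eps_ne : S.eps ≠ 0 := by
  rcases S.epspm with h | h <;> rw [h] <;> norm_num

lemma PFSurf.diffAt {f : Pt → ℝ} (hf : ContDiffOn ℝ (⊤ : ℕ∞) f S.A) {p : Pt} (hp : p ∈ S.A) :
    DifferentiableAt ℝ f p :=
  (hf.differentiableOn (by simp)).differentiableAt (S.openA.mem_nhds hp)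

lemma PFSurf.pdy_smooth {f : Pt → ℝ} (hf : ContDiffOn ℝ (⊤ : ℕ∞) f S.A) (i : Fin 2) :
    ContDiffOn ℝ (⊤ : ℕ∞) (pdy f i) S.A := by
  have h1 : ContDiffOn ℝ (⊤ : ℕ∞) (fderiv ℝ f) S.A :=
    hf.fderiv_of_isOpen S.openA (by simp)
  exact h1.clm_apply contDiffOn_const

lemma PFSurf.y_ne {p : Pt} (hp : p ∈ S.A) : p.2 ≠ 0 := by
  intro h0
  have h := S.homF p hp 2 (by norm_num)
  rw [h0, smul_zero] at h
  have hpp : ((p.1, (0 : Fin 2 → ℝ)) : Pt) = p := by rw [← h0]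
  rw [hpp] at h
  exact S.Fne p hp (by linarith)

lemma PFSurf.vd2_eval (S : PFSurf) (f : Pt → ℝ) (p : Pt) :
    S.vd2 f p
      = S.eps * S.F p * (pdy f 0 p * S.mup 0 p + pdy f 1 p * S.mup 1 p) := by
  simp [PFSurf.vd2, Fin.sum_univ_two]

lemma PFSurf.ellLow_homog (S : PFSurf) {p : Pt} (hp : p ∈ S.A) {t : ℝ} (ht : 0 < t)
    (i : Fin 2) : pdy S.F i (p.1, t • p.2) = pdy S.F i p := by
  have h := pdy_scale S.openA (fun q hq => S.diffAt S.smF hq)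
    (fun q hq => S.conicA q hq t ht) (fun q hq => S.homF q hq t ht) p hp i
  exact mul_left_cancel₀ (ne_of_gt ht) h

lemma PFSurf.F2_smooth (S : PFSurf) : ContDiffOn ℝ (⊤ : ℕ∞) (fun q => (S.F q)^2) S.A :=
  S.smF.pow 2

lemma PFSurf.pdyF2_homog1 (S : PFSurf) {p : Pt} (hp : p ∈ S.A) {t : ℝ} (ht : 0 < t)
    (j : Fin 2) :
    pdy (fun q => (S.F q)^2) j (p.1, t • p.2) = t * pdy (fun q => (S.F q)^2) j p := by
  have h := pdy_scale (c := t^2) S.openA (fun q hq => S.diffAt S.F2_smooth hq)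
    (fun q hq => S.conicA q hq t ht)
    (fun q hq => by rw [S.homF q hq t ht]; ring) p hp j
  have h' : t * pdy (fun q => (S.F q)^2) j (p.1, t • p.2)
      = t * (t * pdy (fun q => (S.F q)^2) j p) := by linear_combination h
  exact mul_left_cancel₀ (ne_of_gt ht) h'

lemma PFSurf.pdyF2_homog2 (S : PFSurf) {p : Pt} (hp : p ∈ S.A) {t : ℝ} (ht : 0 < t)
    (i j : Fin 2) :
    pdy (pdy (fun q => (S.F q)^2) j) i (p.1, t • p.2)
      = pdy (pdy (fun q => (S.F q)^2) j) i p := by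
  have h := pdy_scale (c := t) S.openA
    (fun q hq => S.diffAt (S.pdy_smooth S.F2_smooth j) hq)
    (fun q hq => S.conicA q hq t ht)
    (fun q hq => S.pdyF2_homog1 hq ht j) p hp i
  exact mul_left_cancel₀ (ne_of_gt ht) h

lemma PFSurf.pdyF2_homog3 (S : PFSurf) {p : Pt} (hp : p ∈ S.A) {t : ℝ} (ht : 0 < t)
    (i j k : Fin 2) :
    t * pdy (pdy (pdy (fun q => (S.F q)^2) k) j) i (p.1, t • p.2)
      = pdy (pdy (pdy (fun q => (S.F q)^2) k) j) i p := by
  have h := pdy_scale (c := (1:ℝ)) S.openA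
    (fun q hq => S.diffAt (S.pdy_smooth (S.pdy_smooth S.F2_smooth k) j) hq)
    (fun q hq => S.conicA q hq t ht)
    (fun q hq => by rw [one_mul]; exact S.pdyF2_homog2 hq ht j k) p hp i
  linarith [h]

lemma AnisoChange.pdyphi_homog {S : PFSurf} (C : AnisoChange S) {p : Pt}
    (hp : p ∈ S.A) {t : ℝ} (ht : 0 < t) (i : Fin 2) :
    t * pdy C.phi i (p.1, t • p.2) = pdy C.phi i p := by
  have h := pdy_scale (c := (1:ℝ)) S.openA (fun q hq => S.diffAt C.smphi hq)
    (fun q hq => S.conicA q hq t ht)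
    (fun q hq => by rw [one_mul]; exact C.homphi q hq t ht) p hp i
  linarith [h]

lemma PFSurf.sum_y_mlow (S : PFSurf) {p : Pt} (hp : p ∈ S.A) :
    p.2 0 * S.mlow 0 p + p.2 1 * S.mlow 1 p = 0 := by
  have h := S.ellm p hp
  rw [Fin.sum_univ_two] at h
  have hF := S.Fne p hp
  field_simp at h
  linarith [h]

lemma PFSurf.euler_F (S : PFSurf) {p : Pt} (hp : p ∈ S.A) :
    p.2 0 * pdy S.F 0 p + p.2 1 * pdy S.F 1 p = S.F p := by
  have hc : HasDerivAt (fun t : ℝ => t * S.F p) (S.F p) 1 := by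
    simpa using (hasDerivAt_id (1:ℝ)).mul_const (S.F p)
  exact ray_fderiv (S.diffAt S.smF hp) hc (fun t ht => S.homF p hp t ht)

lemma PFSurf.euler0 (S : PFSurf) {f : Pt → ℝ} (hf : ContDiffOn ℝ (⊤ : ℕ∞) f S.A)
    (hhom : S.Homog0 f) {p : Pt} (hp : p ∈ S.A) :
    p.2 0 * pdy f 0 p + p.2 1 * pdy f 1 p = 0 := by
  have hc : HasDerivAt (fun _ : ℝ => f p) 0 1 := hasDerivAt_const _ _
  exact ray_fderiv (S.diffAt hf hp) hc (fun t ht => hhom p hp t ht)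

lemma PFSurf.det_y_mup (S : PFSurf) {p : Pt} (hp : p ∈ S.A) :
    p.2 0 * S.mup 1 p - p.2 1 * S.mup 0 p ≠ 0 := by
  intro hD
  have a1 := S.sum_y_mlow hp
  have a4 := S.mm p hp
  rw [Fin.sum_univ_two] at a4
  have h0 : p.2 0 * S.eps = 0 := by
    linear_combination (-(p.2 0)) * a4 + S.mlow 1 p * hD + S.mup 0 p * a1
  have h1 : p.2 1 * S.eps = 0 := by
    linear_combination (-(p.2 1)) * a4 - S.mlow 0 p * hD + S.mup 1 p * a1
  have hy0 : p.2 0 = 0 := by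
    rcases mul_eq_zero.mp h0 with h | h
    · exact h
    · exact absurd h S.eps_ne
  have hy1 : p.2 1 = 0 := by
    rcases mul_eq_zero.mp h1 with h | h
    · exact h
    · exact absurd h S.eps_ne
  apply S.y_ne hp
  funext j
  fin_cases j
  · exact hy0
  · exact hy1

lemma PFSurf.det_ell_mlow (S : PFSurf) {p : Pt} (hp : p ∈ S.A) :
    pdy S.F 0 p * S.mlow 1 p - pdy S.F 1 p * S.mlow 0 p ≠ 0 := by
  intro hD
  have a1 := S.sum_y_mlow hp
  have a2 := S.euler_F hp
  have a4 := S.mm p hp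
  rw [Fin.sum_univ_two] at a4
  have hF := S.Fne p hp
  have h1 : S.F p * S.mlow 1 p = 0 := by
    linear_combination (-(S.mlow 1 p)) * a2 + p.2 0 * hD + pdy S.F 1 p * a1
  have h0 : S.F p * S.mlow 0 p = 0 := by
    linear_combination (-(S.mlow 0 p)) * a2 - p.2 1 * hD + pdy S.F 0 p * a1
  have hm0 : S.mlow 0 p = 0 := by
    rcases mul_eq_zero.mp h0 with h | h
    · exact absurd h hF
    · exact h
  have hm1 : S.mlow 1 p = 0 := by
    rcases mul_eq_zero.mp h1 with h | h
    · exact absurd h hF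
    · exact h
  rw [hm0, hm1] at a4
  simp at a4
  exact S.eps_ne a4.symm

lemma PFSurf.mlow_ne (S : PFSurf) {p : Pt} (hp : p ∈ S.A) :
    S.mlow 0 p ≠ 0 ∨ S.mlow 1 p ≠ 0 := by
  by_contra h
  push_neg at h
  have a4 := S.mm p hp
  rw [Fin.sum_univ_two] at a4
  rw [h.1, h.2] at a4
  simp at a4
  exact S.eps_ne a4.symm

lemma PFSurf.mlow_prod_homog (S : PFSurf) {p : Pt} (hp : p ∈ S.A) {t : ℝ}
    (ht : 0 < t) (i j : Fin 2) :
    S.mlow i (p.1, t • p.2) * S.mlow j (p.1, t • p.2) = S.mlow i p * S.mlow j p := by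
  have hq := S.conicA p hp t ht
  have haq := S.angular _ hq i j
  have hap := S.angular p hp i j
  have hg := S.pdyF2_homog2 hp ht i j
  have hl0 := S.ellLow_homog hp ht i
  have hl1 := S.ellLow_homog hp ht j
  have hkey : S.eps * (S.mlow i (p.1, t • p.2) * S.mlow j (p.1, t • p.2))
      = S.eps * (S.mlow i p * S.mlow j p) := by
    linear_combination -(1:ℝ) * haq + hap + (1/2) * hg - (pdy S.F j (p.1, t • p.2)) * hl0 - (pdy S.F i p) * hl1
  exact mul_left_cancel₀ S.eps_ne hkey

lemma PFSurf.mlow_homog (S : PFSurf) {p : Pt} (hp : p ∈ S.A) {t : ℝ} (ht : 0 < t)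
    (i : Fin 2) : S.mlow i (p.1, t • p.2) = S.mlow i p := by
  set K := S.mlow 0 p ^ 2 + S.mlow 1 p ^ 2 with hK
  have hKpos : 0 < K := by
    rw [hK]
    rcases S.mlow_ne hp with h | h <;> positivity
  set u : ℝ → ℝ := fun s =>
    S.mlow 0 (p.1, s • p.2) * S.mlow 0 p + S.mlow 1 (p.1, s • p.2) * S.mlow 1 p with hu
  have husq : ∀ s : ℝ, 0 < s → u s = K ∨ u s = -K := by
    intro s hs
    have e00 := S.mlow_prod_homog hp hs 0 0
    have e01 := S.mlow_prod_homog hp hs 0 1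
    have e11 := S.mlow_prod_homog hp hs 1 1
    have hfac : (u s - K) * (u s + K) = 0 := by
      simp only [hu, hK]
      linear_combination (S.mlow 0 p)^2 * e00 + 2*(S.mlow 0 p)*(S.mlow 1 p)*e01
        + (S.mlow 1 p)^2 * e11
    rcases mul_eq_zero.mp hfac with h | h
    · left; linarith
    · right; linarith
  have hcont : ContinuousOn u (Set.Ioi (0:ℝ)) := by
    have hmap : Continuous (fun s : ℝ => ((p.1, s • p.2) : Pt)) :=
      continuous_const.prodMk (continuous_id.smul continuous_const)
    have hMap : Set.MapsTo (fun s : ℝ => ((p.1, s • p.2) : Pt)) (Set.Ioi 0) S.A :=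
      fun s hs => S.conicA p hp s hs
    exact (((S.smml 0).continuousOn.comp hmap.continuousOn hMap).mul
        continuousOn_const).add
      (((S.smml 1).continuousOn.comp hmap.continuousOn hMap).mul continuousOn_const)
  have hu1 : u 1 = K := by
    simp only [hu, hK, one_smul, Prod.mk.eta]
    ring
  have hut : u t = K := by
    by_contra hne
    have h2 := (husq t ht).resolve_left hne
    have hsub : Set.uIcc (1:ℝ) t ⊆ Set.Ioi 0 := by
      intro s hs
      rw [Set.mem_uIcc] at hs
      rcases hs with ⟨h1', _⟩ | ⟨h1', _⟩ <;> · simp only [Set.mem_Ioi]; linarith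
    have h0mem : (0:ℝ) ∈ Set.uIcc (u 1) (u t) := by
      rw [hu1, h2, Set.mem_uIcc]
      right
      constructor <;> linarith
    obtain ⟨s, hsmem, hs0⟩ := intermediate_value_uIcc (hcont.mono hsub) h0mem
    rcases husq s (hsub hsmem) with h | h <;> rw [hs0] at h <;> linarith
  have e0 := S.mlow_prod_homog hp ht i 0
  have e1 := S.mlow_prod_homog hp ht i 1
  have key : S.mlow i (p.1, t • p.2) * K = S.mlow i p * K := by
    simp only [hu] at hut
    rw [hK] at hut ⊢
    linear_combination (S.mlow 0 p) * e0 + (S.mlow 1 p) * e1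
      - (S.mlow i (p.1, t • p.2)) * hut
  exact mul_right_cancel₀ (ne_of_gt hKpos) key

lemma PFSurf.mup_homog (S : PFSurf) {p : Pt} (hp : p ∈ S.A) {t : ℝ} (ht : 0 < t)
    (i : Fin 2) : S.mup i (p.1, t • p.2) = S.mup i p := by
  have hq := S.conicA p hp t ht
  have h3q := S.mell _ hq
  have h3p := S.mell p hp
  have h4q := S.mm _ hq
  have h4p := S.mm p hp
  rw [Fin.sum_univ_two] at h3q h3p h4q h4p
  rw [S.ellLow_homog hp ht 0, S.ellLow_homog hp ht 1] at h3q
  rw [S.mlow_homog hp ht 0, S.mlow_homog hp ht 1] at h4q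
  have hsol := solve2 (fun j => pdy S.F j p) (fun j => S.mlow j p)
    (fun j => S.mup j (p.1, t • p.2) - S.mup j p) (S.det_ell_mlow hp)
    (by linear_combination h3q - h3p)
    (by linear_combination h4q - h4p)
  have hc0 : S.mup 0 (p.1, t • p.2) = S.mup 0 p := by
    have := hsol.1; linarith
  have hc1 : S.mup 1 (p.1, t • p.2) = S.mup 1 p := by
    have := hsol.2; linarith
  fin_cases i
  · exact hc0
  · exact hc1

lemma PFSurf.I_homog0 (S : PFSurf) : S.Homog0 S.Iscal := by
  intro p hp t ht
  have hq := S.conicA p hp t ht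
  obtain ⟨i0, hi0⟩ : ∃ i0 : Fin 2, S.mlow i0 p ≠ 0 := by
    rcases S.mlow_ne hp with h | h
    exacts [⟨0, h⟩, ⟨1, h⟩]
  have hcq := S.cartan _ hq i0 i0 i0
  have hcp := S.cartan p hp i0 i0 i0
  have h3 := S.pdyF2_homog3 hp ht i0 i0 i0
  have hm := S.mlow_homog hp ht i0
  have hF := S.homF p hp t ht
  rw [hF, hm] at hcq
  have hkey : (S.Iscal (p.1, t • p.2) - S.Iscal p)
      * (S.mlow i0 p * (S.mlow i0 p * S.mlow i0 p)) = 0 := by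
    linear_combination (-1 : ℝ) * hcq + hcp + (1/4) * S.F p * h3
  have hne : S.mlow i0 p * (S.mlow i0 p * S.mlow i0 p) ≠ 0 :=
    mul_ne_zero hi0 (mul_ne_zero hi0 hi0)
  have := (mul_eq_zero.mp hkey).resolve_right hne
  linarith

lemma PFSurf.pd_zero_on (S : PFSurf) {z : Pt → ℝ} (hz : ∀ q ∈ S.A, z q = 0)
    {p : Pt} (hp : p ∈ S.A) :
    (∀ i, pdx z i p = 0) ∧ (∀ i, pdy z i p = 0) := by
  have h0 : fderiv ℝ z p = 0 := fderiv_zero_of_locally_const S.openA hp hz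
  constructor <;> intro i <;> simp [pdx, pdy, h0]

lemma PFSurf.hdel_zero_on (S : PFSurf) {z : Pt → ℝ} (hz : ∀ q ∈ S.A, z q = 0)
    {p : Pt} (hp : p ∈ S.A) (i : Fin 2) : S.hdel z i p = 0 := by
  obtain ⟨hx, hy⟩ := S.pd_zero_on hz hp
  simp [PFSurf.hdel, Fin.sum_univ_two, hx, hy]

lemma const_on_ball {S : PFSurf} {f : Pt → ℝ} (hf : ContDiffOn ℝ (⊤ : ℕ∞) f S.A)
    (hder : ∀ q ∈ S.A, fderiv ℝ f q = 0) {p : Pt} {r : ℝ}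
    (hball : Metric.ball p r ⊆ S.A) :
    ∀ q ∈ Metric.ball p r, f q = f p := by
  intro q hq
  have hrpos : 0 < r := Metric.nonempty_ball.mp ⟨q, hq⟩
  have hp' : p ∈ Metric.ball p r := Metric.mem_ball_self hrpos
  have hdiff : DifferentiableOn ℝ f (Metric.ball p r) :=
    (hf.differentiableOn (by simp)).mono hball
  have hbound : ∀ x ∈ Metric.ball p r, ‖fderivWithin ℝ f (Metric.ball p r) x‖ ≤ 0 := by
    intro x hx
    rw [fderivWithin_of_isOpen Metric.isOpen_ball hx, hder x (hball hx)]
    simp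
  have hle := Convex.norm_image_sub_le_of_norm_fderivWithin_le hdiff hbound
    (convex_ball p r) hp' hq
  have h0 : ‖f q - f p‖ ≤ 0 := by simpa using hle
  have := norm_eq_zero.mp (le_antisymm h0 (norm_nonneg _))
  linarith [sub_eq_zero.mp this]

lemma PFSurf.vd2_eq_zero_of_const (S : PFSurf) (R : Pt → ℝ)
    (hcomm1 : ∀ f : Pt → ℝ, ContDiffOn ℝ (⊤ : ℕ∞) f S.A → S.Homog0 f →
      ∀ p ∈ S.A, S.hd2 (S.hd1 f) p - S.hd1 (S.hd2 f) p = -(R p) * S.vd2 f p)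
    (hR : ∀ p ∈ S.A, R p ≠ 0)
    {f : Pt → ℝ} (hsm : ContDiffOn ℝ (⊤ : ℕ∞) f S.A) (hhom : S.Homog0 f)
    (h1 : ∀ q ∈ S.A, S.hd1 f q = 0) (h2 : ∀ q ∈ S.A, S.hd2 f q = 0)
    {p : Pt} (hp : p ∈ S.A) :
    pdy f 0 p * S.mup 0 p + pdy f 1 p * S.mup 1 p = 0 := by
  have hc := hcomm1 f hsm hhom p hp
  have hz1 : S.hd2 (S.hd1 f) p = 0 := by
    unfold PFSurf.hd2
    rw [Fin.sum_univ_two, S.hdel_zero_on h1 hp 0, S.hdel_zero_on h1 hp 1]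
    ring
  have hz2 : S.hd1 (S.hd2 f) p = 0 := by
    unfold PFSurf.hd1
    rw [Fin.sum_univ_two, S.hdel_zero_on h2 hp 0, S.hdel_zero_on h2 hp 1]
    ring
  rw [hz1, hz2] at hc
  have hv : S.vd2 f p = 0 := by
    have hRv : R p * S.vd2 f p = 0 := by linarith
    exact (mul_eq_zero.mp hRv).resolve_left (hR p hp)
  rw [S.vd2_eval] at hv
  rcases mul_eq_zero.mp hv with h | h
  · rcases mul_eq_zero.mp h with h' | h'
    · exact absurd h' S.eps_ne
    · exact absurd h' (S.Fne p hp)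
  · exact h

end AuxS

/-- If `F` is Berwaldian (`I_{,1} = I_{,2} = 0`), the Gauss
curvature `R` is nowhere zero, and `φ_{;2}` is horizontally constant, then
`F̄` is Berwaldian (`Ī_{,a} = Ī_{,b} = 0`). -/
theorem statement7 (S : PFSurf) (C : AnisoChange S) (R : Pt → ℝ)
    (hcomm1 : ∀ f : Pt → ℝ, ContDiffOn ℝ (⊤ : ℕ∞) f S.A → S.Homog0 f →
      ∀ p ∈ S.A, S.hd2 (S.hd1 f) p - S.hd1 (S.hd2 f) p = -(R p) * S.vd2 f p)
    (hBer : ∀ p ∈ S.A, S.hd1 S.Iscal p = 0 ∧ S.hd2 S.Iscal p = 0)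
    (hR : ∀ p ∈ S.A, R p ≠ 0)
    (hhc : S.HorizConst (S.vd2 C.phi)) :
    C.BerwaldBarScal := by
  intro p hp
  have hepsne := S.eps_ne
  have hIy : ∀ q ∈ S.A, ∀ i, pdy S.Iscal i q = 0 := by
    intro q hq
    have hE := S.euler0 S.smI S.I_homog0 hq
    have hM := S.vd2_eq_zero_of_const R hcomm1 hR S.smI S.I_homog0
      (fun z hz => (hBer z hz).1) (fun z hz => (hBer z hz).2) hq
    have hsol := solve2 (fun j => q.2 j) (fun j => S.mup j q)
      (fun j => pdy S.Iscal j q) (S.det_y_mup hq)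
      hE (by linear_combination hM)
    intro i
    have h0 := hsol.1; have h1 := hsol.2
    fin_cases i
    · exact h0
    · exact h1
  have hIx : ∀ q ∈ S.A, ∀ i, pdx S.Iscal i q = 0 := by
    intro q hq
    have hFq := S.Fne q hq
    have hd1 := (hBer q hq).1
    have hd2 := (hBer q hq).2
    unfold PFSurf.hd1 PFSurf.ellUp at hd1
    unfold PFSurf.hd2 at hd2
    rw [Fin.sum_univ_two] at hd1 hd2
    have h1' : q.2 0 * S.hdel S.Iscal 0 q + q.2 1 * S.hdel S.Iscal 1 q = 0 := by
      field_simp at hd1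
      linarith [hd1]
    have h2' : S.mup 0 q * S.hdel S.Iscal 0 q + S.mup 1 q * S.hdel S.Iscal 1 q = 0 := by
      rcases mul_eq_zero.mp hd2 with h | h
      · exact absurd h hepsne
      · exact h
    have hsol := solve2 (fun j => q.2 j) (fun j => S.mup j q)
      (fun j => S.hdel S.Iscal j q) (S.det_y_mup hq) h1' h2'
    intro i
    have hde : S.hdel S.Iscal i q = 0 := by
      have h0 := hsol.1; have h1 := hsol.2
      fin_cases i
      · exact h0
      · exact h1
    unfold PFSurf.hdel at hde
    rw [Fin.sum_univ_two, hIy q hq 0, hIy q hq 1] at hde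
    simpa using hde
  have hgsm : ContDiffOn ℝ (⊤ : ℕ∞) (S.vd2 C.phi) S.A := by
    have hrepr : S.vd2 C.phi = fun q =>
        S.eps * S.F q * (pdy C.phi 0 q * S.mup 0 q + pdy C.phi 1 q * S.mup 1 q) := by
      funext q; rw [S.vd2_eval]
    rw [hrepr]
    exact (contDiffOn_const.mul S.smF).mul
      (((S.pdy_smooth C.smphi 0).mul (S.smmu 0)).add
        ((S.pdy_smooth C.smphi 1).mul (S.smmu 1)))
  have hghom : S.Homog0 (S.vd2 C.phi) := by
    intro q hq t ht
    have htne : t ≠ 0 := ne_of_gt ht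
    have e0 : pdy C.phi 0 (q.1, t • q.2) = pdy C.phi 0 q / t := by
      have h := C.pdyphi_homog hq ht 0
      field_simp
      linarith [h]
    have e1 : pdy C.phi 1 (q.1, t • q.2) = pdy C.phi 1 q / t := by
      have h := C.pdyphi_homog hq ht 1
      field_simp
      linarith [h]
    rw [S.vd2_eval, S.vd2_eval, S.homF q hq t ht, S.mup_homog hq ht 0,
      S.mup_homog hq ht 1, e0, e1]
    field_simp
  have hgd1 : ∀ q ∈ S.A, S.hd1 (S.vd2 C.phi) q = 0 := by
    intro q hq
    unfold PFSurf.hd1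
    rw [Fin.sum_univ_two, hhc q hq 0, hhc q hq 1]
    ring
  have hgd2 : ∀ q ∈ S.A, S.hd2 (S.vd2 C.phi) q = 0 := by
    intro q hq
    unfold PFSurf.hd2
    rw [Fin.sum_univ_two, hhc q hq 0, hhc q hq 1]
    ring
  have hgy : ∀ q ∈ S.A, ∀ i, pdy (S.vd2 C.phi) i q = 0 := by
    intro q hq
    have hE := S.euler0 hgsm hghom hq
    have hM := S.vd2_eq_zero_of_const R hcomm1 hR hgsm hghom hgd1 hgd2 hq
    have hsol := solve2 (fun j => q.2 j) (fun j => S.mup j q)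
      (fun j => pdy (S.vd2 C.phi) j q) (S.det_y_mup hq)
      hE (by linear_combination hM)
    intro i
    have h0 := hsol.1; have h1 := hsol.2
    fin_cases i
    · exact h0
    · exact h1
  have hgx : ∀ q ∈ S.A, ∀ i, pdx (S.vd2 C.phi) i q = 0 := by
    intro q hq i
    have h := hhc q hq i
    unfold PFSurf.hdel at h
    rw [Fin.sum_univ_two, hgy q hq 0, hgy q hq 1] at h
    simpa using h
  obtain ⟨r, hr, hball⟩ := Metric.isOpen_iff.mp S.openA p hp
  have hIconst : ∀ q ∈ Metric.ball p r, S.Iscal q = S.Iscal p :=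
    const_on_ball S.smI
      (fun q hq => fderiv_zero_of_partials (hIx q hq) (hIy q hq)) hball
  have hgconst : ∀ q ∈ Metric.ball p r, S.vd2 C.phi q = S.vd2 C.phi p :=
    const_on_ball hgsm
      (fun q hq => fderiv_zero_of_partials (hgx q hq) (hgy q hq)) hball
  have hvvz : ∀ q ∈ S.A, S.vd2 (S.vd2 C.phi) q = 0 := by
    intro q hq
    rw [S.vd2_eval, hgy q hq 0, hgy q hq 1]
    ring
  have hrhoconst : ∀ q ∈ Metric.ball p r, C.rho q = C.rho p := by
    intro q hq
    have hqA := hball hq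
    have hsig : C.sigma q = C.sigma p := by
      unfold AnisoChange.sigma
      rw [hvvz q hqA, hvvz p hp, hIconst q hq, hgconst q hq]
    unfold AnisoChange.rho
    rw [hsig, hgconst q hq]
  have hIbar : ∀ q ∈ Metric.ball p r,
      C.Ibar q = Real.sqrt (S.eps * C.rho p)
        * (S.Iscal p + 2 * S.eps * S.vd2 C.phi p) := by
    intro q hq
    have hfl : fderiv ℝ (fun z => Real.log (C.rho z)) q = 0 :=
      fderiv_zero_of_locally_const Metric.isOpen_ball hq
        (c := Real.log (C.rho p)) (fun z hz => by rw [hrhoconst z hz])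
    have hpd : ∀ i, pdy (fun z => Real.log (C.rho z)) i q = 0 := by
      intro i; simp [pdy, hfl]
    have hlog : S.vd2 (fun z => Real.log (C.rho z)) q = 0 := by
      rw [S.vd2_eval, hpd 0, hpd 1]
      ring
    unfold AnisoChange.Ibar
    rw [hlog, hrhoconst q hq, hIconst q hq, hgconst q hq]
    ring
  have hIbar0 : fderiv ℝ C.Ibar p = 0 :=
    fderiv_zero_of_locally_const Metric.isOpen_ball (Metric.mem_ball_self hr) hIbar
  have hdb : ∀ i, C.hdelbar C.Ibar i p = 0 := by
    intro i
    unfold AnisoChange.hdelbar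
    rw [Fin.sum_univ_two]
    simp [pdx, pdy, hIbar0]
  constructor
  · unfold AnisoChange.ha
    rw [Fin.sum_univ_two, hdb 0, hdb 1]
    ring
  · unfold AnisoChange.hb
    rw [Fin.sum_univ_two, hdb 0, hdb 1]
    ring
end
end

section
/- Under the anisotropic conformal change F̄ = e^{φ}F of a conic pseudo-Finsler surface (M,F): (a) if φ_{;2} is a function of the base point x alone (so φ_{;2;2} = 0) and F satisfies the T-condition (I_{;2} = 0), then F̄ satisfies the T-condition (Ī_{;2} = 0); (b) if σ = (φ_{;2})² (equivalently det ḡ = e^{4φ} det g) and F satisfies the T-condition, then F̄ satisfies the T-condition if and only if φ_{;2;2} = 0. -/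
/-!
Common framework: conic pseudo-Finsler surfaces on an open conic subset
`A ⊆ M × (ℝ² ∖ {0})`, with modified Berwald frame, scalar derivatives,
and anisotropic conformal change `F̄ = e^φ F`.
-/

noncomputable section

open Real

namespace Tools

variable {f g : Pt → ℝ} {p : Pt} {i : Fin 2}

lemma pdy_congr_set {A : Set Pt} (hA : IsOpen A) (hp : p ∈ A)
    (h : ∀ q ∈ A, f q = g q) : pdy f i p = pdy g i p := by
  have hev : f =ᶠ[nhds p] g := Filter.eventuallyEq_of_mem (hA.mem_nhds hp) h
  simp only [pdy, hev.fderiv_eq]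

lemma pdy_const (c : ℝ) : pdy (fun _ => c) i p = 0 := by
  simp [pdy]

lemma pdy_zero_of_eq_zero {A : Set Pt} (hA : IsOpen A) (hp : p ∈ A)
    (h : ∀ q ∈ A, f q = 0) : pdy f i p = 0 := by
  rw [pdy_congr_set hA hp (g := fun _ => (0:ℝ)) h]; exact pdy_const 0

lemma pdy_add (hf : DifferentiableAt ℝ f p) (hg : DifferentiableAt ℝ g p) :
    pdy (fun q => f q + g q) i p = pdy f i p + pdy g i p := by
  simp [pdy, fderiv_fun_add hf hg]

lemma pdy_sub (hf : DifferentiableAt ℝ f p) (hg : DifferentiableAt ℝ g p) :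
    pdy (fun q => f q - g q) i p = pdy f i p - pdy g i p := by
  simp [pdy, fderiv_fun_sub hf hg]

lemma pdy_mul (hf : DifferentiableAt ℝ f p) (hg : DifferentiableAt ℝ g p) :
    pdy (fun q => f q * g q) i p = f p * pdy g i p + g p * pdy f i p := by
  simp [pdy, fderiv_fun_mul hf hg]

lemma pdy_const_mul (c : ℝ) (hf : DifferentiableAt ℝ f p) :
    pdy (fun q => c * f q) i p = c * pdy f i p := by
  simp [pdy, fderiv_const_mul hf c]

lemma pdy_sum {n : ℕ} {F : Fin n → Pt → ℝ} (h : ∀ j, DifferentiableAt ℝ (F j) p) :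
    pdy (fun q => ∑ j, F j q) i p = ∑ j, pdy (F j) i p := by
  simp [pdy, fderiv_fun_sum (fun j _ => h j)]

lemma pdy_comp {h : ℝ → ℝ} {h' : ℝ} (hh : HasDerivAt h h' (f p))
    (hf : DifferentiableAt ℝ f p) :
    pdy (fun q => h (f q)) i p = h' * pdy f i p := by
  have hc := (hh.comp_hasFDerivAt p hf.hasFDerivAt).fderiv
  simp only [pdy]
  rw [show (fun q => h (f q)) = h ∘ f from rfl, hc]
  simp

lemma pdy_sq (hf : DifferentiableAt ℝ f p) :
    pdy (fun q => (f q)^2) i p = 2 * f p * pdy f i p := by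
  rw [show (fun q => (f q)^2) = fun q => f q * f q by funext q; ring, pdy_mul hf hf]
  ring

lemma contDiffAt_pdy (hf : ContDiffAt ℝ (⊤ : ℕ∞) f p) (i : Fin 2) :
    ContDiffAt ℝ (⊤ : ℕ∞) (pdy f i) p := by
  have h := hf.fderiv_right (m := (⊤ : ℕ∞)) (by simp)
  exact h.clm_apply contDiffAt_const

abbrev ey (i : Fin 2) : Pt := ((0 : Fin 2 → ℝ), Pi.single i 1)

lemma vec_decomp (v : Fin 2 → ℝ) :
    (((0 : Fin 2 → ℝ), v) : Pt) = v 0 • ey 0 + v 1 • ey 1 := by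
  refine Prod.ext ?_ ?_
  · simp
  · funext j
    fin_cases j <;> simp [Pi.single_apply]

lemma sum_mul_pdy (v : Fin 2 → ℝ) :
    ∑ i, v i * pdy f i p = fderiv ℝ f p (((0 : Fin 2 → ℝ), v) : Pt) := by
  rw [vec_decomp v, map_add, map_smul, map_smul]
  simp [pdy, Fin.sum_univ_two]

lemma euler {r : ℕ} (hf : DifferentiableAt ℝ f p)
    (hom : ∀ t : ℝ, 0 < t → f (p.1, t • p.2) = t ^ r * f p) :
    ∑ i, p.2 i * pdy f i p = r * f p := by
  have h1 : HasDerivAt (fun t : ℝ => t • p.2) ((1:ℝ) • p.2) 1 :=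
    (hasDerivAt_id 1).smul_const p.2
  have h2 : HasDerivAt (fun _ : ℝ => p.1) (0 : Fin 2 → ℝ) 1 := hasDerivAt_const 1 p.1
  have hγ : HasDerivAt (fun t : ℝ => ((p.1, t • p.2) : Pt)) (((0 : Fin 2 → ℝ), p.2) : Pt) 1 := by
    simpa using h2.prodMk h1
  have hp1 : ((p.1, (1:ℝ) • p.2) : Pt) = p := by simp
  have hF : HasFDerivAt f (fderiv ℝ f p) ((fun t : ℝ => ((p.1, t • p.2) : Pt)) 1) := by
    simp only [hp1]
    exact hf.hasFDerivAt
  have hcomp := hF.comp_hasDerivAt 1 hγ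
  have hev : (fun t : ℝ => t ^ r * f p) =ᶠ[nhds (1:ℝ)]
      (f ∘ fun t : ℝ => ((p.1, t • p.2) : Pt)) := by
    filter_upwards [eventually_gt_nhds zero_lt_one] with t ht
    exact (hom t ht).symm
  have hcomp' : HasDerivAt (fun t : ℝ => t ^ r * f p)
      (fderiv ℝ f p (((0 : Fin 2 → ℝ), p.2) : Pt)) 1 :=
    hcomp.congr_of_eventuallyEq hev
  have hstd : HasDerivAt (fun t : ℝ => t ^ r * f p) ((r : ℝ) * 1 ^ (r-1) * f p) 1 :=
    (hasDerivAt_pow r 1).mul_const (f p)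
  have hu := hcomp'.unique hstd
  rw [sum_mul_pdy, hu]
  simp

end Tools

namespace Fr
open Tools

variable (S : PFSurf) {p : Pt}

lemma cF (hp : p ∈ S.A) : ContDiffAt ℝ (⊤ : ℕ∞) S.F p :=
  S.smF.contDiffAt (S.openA.mem_nhds hp)

lemma cI (hp : p ∈ S.A) : ContDiffAt ℝ (⊤ : ℕ∞) S.Iscal p :=
  S.smI.contDiffAt (S.openA.mem_nhds hp)

lemma cmu (i : Fin 2) (hp : p ∈ S.A) : ContDiffAt ℝ (⊤ : ℕ∞) (S.mup i) p :=
  (S.smmu i).contDiffAt (S.openA.mem_nhds hp)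

lemma cmlw (i : Fin 2) (hp : p ∈ S.A) : ContDiffAt ℝ (⊤ : ℕ∞) (S.mlow i) p :=
  (S.smml i).contDiffAt (S.openA.mem_nhds hp)

lemma cF2 (hp : p ∈ S.A) : ContDiffAt ℝ (⊤ : ℕ∞) (fun q => (S.F q)^2) p := (cF S hp).pow 2

lemma dF (hp : p ∈ S.A) : DifferentiableAt ℝ S.F p := (cF S hp).differentiableAt (by simp)
lemma dI (hp : p ∈ S.A) : DifferentiableAt ℝ S.Iscal p := (cI S hp).differentiableAt (by simp)
lemma dmu (i : Fin 2) (hp : p ∈ S.A) : DifferentiableAt ℝ (S.mup i) p :=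
  (cmu S i hp).differentiableAt (by simp)
lemma dmlw (i : Fin 2) (hp : p ∈ S.A) : DifferentiableAt ℝ (S.mlow i) p :=
  (cmlw S i hp).differentiableAt (by simp)
lemma dpdyF (k : Fin 2) (hp : p ∈ S.A) : DifferentiableAt ℝ (pdy S.F k) p :=
  (contDiffAt_pdy (cF S hp) k).differentiableAt (by simp)
lemma dpdypdyF2 (j k : Fin 2) (hp : p ∈ S.A) :
    DifferentiableAt ℝ (pdy (pdy (fun q => (S.F q)^2) j) k) p :=
  (contDiffAt_pdy (contDiffAt_pdy (cF2 S hp) j) k).differentiableAt (by simp)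

lemma epsSq : S.eps * S.eps = 1 := by rcases S.epspm with h|h <;> rw [h] <;> norm_num
lemma epsNe : S.eps ≠ 0 := by rcases S.epspm with h|h <;> rw [h] <;> norm_num

lemma eulerF (hp : p ∈ S.A) :
    p.2 0 * pdy S.F 0 p + p.2 1 * pdy S.F 1 p = S.F p := by
  have h := Tools.euler (r := 1) (dF S hp) (fun t ht => by rw [S.homF p hp t ht]; ring)
  simpa [Fin.sum_univ_two] using h

lemma eulerPhi (hp : p ∈ S.A) {φ : Pt → ℝ} (hφ : DifferentiableAt ℝ φ p)
    (hom : ∀ q ∈ S.A, ∀ t : ℝ, 0 < t → φ (q.1, t • q.2) = φ q) :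
    p.2 0 * pdy φ 0 p + p.2 1 * pdy φ 1 p = 0 := by
  have h := Tools.euler (r := 0) hφ (fun t ht => by rw [hom p hp t ht]; ring)
  simpa [Fin.sum_univ_two] using h

lemma ellm2 (hp : p ∈ S.A) :
    S.mup 0 p * pdy S.F 0 p + S.mup 1 p * pdy S.F 1 p = 0 := by
  simpa [Fin.sum_univ_two] using S.mell p hp

lemma mm2 (hp : p ∈ S.A) :
    S.mup 0 p * S.mlow 0 p + S.mup 1 p * S.mlow 1 p = S.eps := by
  simpa [Fin.sum_univ_two] using S.mm p hp

lemma lum2 (hp : p ∈ S.A) :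
    S.ellUp 0 p * S.mlow 0 p + S.ellUp 1 p * S.mlow 1 p = 0 := by
  simpa [Fin.sum_univ_two, PFSurf.ellUp] using S.ellm p hp

lemma luL (hp : p ∈ S.A) :
    S.ellUp 0 p * pdy S.F 0 p + S.ellUp 1 p * pdy S.F 1 p = 1 := by
  have h := eulerF S hp
  have hF := S.Fne p hp
  simp only [PFSurf.ellUp]
  field_simp
  linear_combination h

lemma g2_eq (hp : p ∈ S.A) (i j : Fin 2) :
    (1/2) * pdy (pdy (fun q => (S.F q)^2) j) i p
      = pdy S.F i p * pdy S.F j p + S.F p * pdy (pdy S.F j) i p := by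
  have h1 : pdy (pdy (fun q => (S.F q)^2) j) i p
      = pdy (fun q => 2 * (S.F q * pdy S.F j q)) i p :=
    pdy_congr_set S.openA hp (fun q hq => by rw [pdy_sq (dF S hq)]; ring)
  rw [h1, pdy_const_mul 2 ((dF S hp).fun_mul (dpdyF S j hp)),
      pdy_mul (dF S hp) (dpdyF S j hp)]
  ring

lemma g2v (hp : p ∈ S.A) (i j : Fin 2) :
    (1/2) * pdy (pdy (fun q => (S.F q)^2) j) i p
      = pdy S.F i p * pdy S.F j p + S.eps * S.mlow i p * S.mlow j p := by
  have ha := S.angular p hp i j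
  linear_combination ha

lemma FFij (hp : p ∈ S.A) (i j : Fin 2) :
    pdy (pdy S.F j) i p = S.eps * S.mlow i p * S.mlow j p / S.F p := by
  have ha := S.angular p hp i j
  have h2 := g2_eq S hp i j
  have hF := S.Fne p hp
  field_simp
  linear_combination ha - h2

lemma third (hp : p ∈ S.A) (i j k : Fin 2) :
    pdy (pdy (pdy (fun q => (S.F q)^2) k) j) i p
      = 4 * S.Iscal p * S.mlow i p * S.mlow j p * S.mlow k p / S.F p := by
  have hc := S.cartan p hp i j k
  have hF := S.Fne p hp
  field_simp
  linear_combination 4 * hc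

lemma Kdelta (hp : p ∈ S.A) (i j : Fin 2) :
    S.ellUp i p * pdy S.F j p + S.eps * S.mup i p * S.mlow j p
      = if i = j then (1:ℝ) else 0 := by
  have e1 := luL S hp
  have e2 := ellm2 S hp
  have e3 := lum2 S hp
  have e4 := mm2 S hp
  have e5 := epsSq S
  have h1 : (Matrix.of ![![pdy S.F 0 p, pdy S.F 1 p], ![S.mlow 0 p, S.mlow 1 p]]) *
      (Matrix.of ![![S.ellUp 0 p, S.eps * S.mup 0 p], ![S.ellUp 1 p, S.eps * S.mup 1 p]]) = 1 := by
    ext a b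
    fin_cases a <;> fin_cases b <;>
      simp [Matrix.mul_apply, Fin.sum_univ_two, Matrix.one_apply]
    · linear_combination e1
    · linear_combination S.eps * e2
    · linear_combination e3
    · linear_combination S.eps * e4 + e5
  rw [mul_eq_one_comm] at h1
  have k00 := Matrix.ext_iff.2 h1 0 0
  have k01 := Matrix.ext_iff.2 h1 0 1
  have k10 := Matrix.ext_iff.2 h1 1 0
  have k11 := Matrix.ext_iff.2 h1 1 1
  simp [Matrix.mul_apply, Fin.sum_univ_two, Matrix.one_apply] at k00 k01 k10 k11
  fin_cases i <;> fin_cases j <;> simp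
  · linear_combination k00
  · linear_combination k01
  · linear_combination k10
  · linear_combination k11

end Fr

namespace Tools

variable {f : Pt → ℝ} {p : Pt} {i : Fin 2}

lemma pdy_inv (hf : DifferentiableAt ℝ f p) (hne : f p ≠ 0) :
    pdy (fun q => (f q)⁻¹) i p = -((f p)^2)⁻¹ * pdy f i p :=
  pdy_comp (hasDerivAt_inv hne) hf

lemma pdy_log (hf : DifferentiableAt ℝ f p) (hne : f p ≠ 0) :
    pdy (fun q => Real.log (f q)) i p = (f p)⁻¹ * pdy f i p :=
  pdy_comp (Real.hasDerivAt_log hne) hf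

lemma pdy_sqrt (hf : DifferentiableAt ℝ f p) (hne : f p ≠ 0) :
    pdy (fun q => Real.sqrt (f q)) i p = (1 / (2 * Real.sqrt (f p))) * pdy f i p :=
  pdy_comp (hasDerivAt_sqrt hne) hf

end Tools

namespace Fr
open Tools

variable (S : PFSurf) {p : Pt}

lemma dmell (hp : p ∈ S.A) (s : Fin 2) :
    pdy S.F 0 p * pdy (S.mup 0) s p + pdy S.F 1 p * pdy (S.mup 1) s p
      = -(S.mlow s p / S.F p) := by
  have h1 : pdy (fun q => ∑ k, S.mup k q * pdy S.F k q) s p = 0 :=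
    pdy_zero_of_eq_zero S.openA hp (fun q hq => S.mell q hq)
  rw [pdy_sum (fun k => (dmu S k hp).fun_mul (dpdyF S k hp))] at h1
  simp only [Fin.sum_univ_two] at h1
  rw [pdy_mul (dmu S 0 hp) (dpdyF S 0 hp), pdy_mul (dmu S 1 hp) (dpdyF S 1 hp),
      FFij S hp s 0, FFij S hp s 1] at h1
  have e4 := mm2 S hp
  have e5 := epsSq S
  linear_combination h1 + (-(S.eps * S.mlow s p / S.F p)) * e4
    + (-(S.mlow s p / S.F p)) * e5

lemma dmlk (hp : p ∈ S.A) (k s : Fin 2) :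
    pdy (S.mlow k) s p
      = 2 * S.eps * S.Iscal p * S.mlow s p * S.mlow k p / S.F p
        + ((pdy S.F k p * pdy S.F 0 p + S.eps * S.mlow k p * S.mlow 0 p) * pdy (S.mup 0) s p
          + (pdy S.F k p * pdy S.F 1 p + S.eps * S.mlow k p * S.mlow 1 p) * pdy (S.mup 1) s p) := by
  have hdc : ∀ j : Fin 2,
      DifferentiableAt ℝ (fun q => (1/2) * pdy (pdy (fun r => (S.F r)^2) j) k q) p :=
    fun j => (dpdypdyF2 S j k hp).const_mul _
  have h1 : pdy (S.mlow k) s p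
      = pdy (fun q => ∑ j, ((1/2) * pdy (pdy (fun r => (S.F r)^2) j) k q) * S.mup j q) s p :=
    pdy_congr_set S.openA hp (fun q hq => S.mraise q hq k)
  rw [h1, pdy_sum (fun j => (hdc j).fun_mul (dmu S j hp))]
  simp only [Fin.sum_univ_two]
  rw [pdy_mul (hdc 0) (dmu S 0 hp), pdy_mul (hdc 1) (dmu S 1 hp)]
  rw [pdy_const_mul _ (dpdypdyF2 S 0 k hp), pdy_const_mul _ (dpdypdyF2 S 1 k hp),
      third S hp s k 0, third S hp s k 1, g2v S hp k 0, g2v S hp k 1]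
  have e4 := mm2 S hp
  linear_combination (2 * S.Iscal p * S.mlow s p * S.mlow k p / S.F p) * e4

lemma dmmB (hp : p ∈ S.A) (s : Fin 2) :
    S.mlow 0 p * pdy (S.mup 0) s p + S.mlow 1 p * pdy (S.mup 1) s p
      = -(S.Iscal p * S.mlow s p / S.F p) := by
  have h1 : pdy (fun q => ∑ k, S.mup k q * S.mlow k q) s p = 0 := by
    rw [pdy_congr_set S.openA hp (g := fun _ => S.eps) (fun q hq => S.mm q hq)]
    exact pdy_const _
  rw [pdy_sum (fun k => (dmu S k hp).fun_mul (dmlw S k hp))] at h1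
  simp only [Fin.sum_univ_two] at h1
  rw [pdy_mul (dmu S 0 hp) (dmlw S 0 hp), pdy_mul (dmu S 1 hp) (dmlw S 1 hp),
      dmlk S hp 0 s, dmlk S hp 1 s] at h1
  have e2 := ellm2 S hp
  have e4 := mm2 S hp
  have e5 := epsSq S
  linear_combination (1/2) * h1
    + (-(S.Iscal p * S.mlow s p / S.F p)
        - (1/2) * (S.mlow 0 p * pdy (S.mup 0) s p + S.mlow 1 p * pdy (S.mup 1) s p)) * e5
    + (-(S.eps * S.Iscal p * S.mlow s p / S.F p)
        - (S.eps/2) * (S.mlow 0 p * pdy (S.mup 0) s p + S.mlow 1 p * pdy (S.mup 1) s p)) * e4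
    + (-(1/2) * (pdy S.F 0 p * pdy (S.mup 0) s p + pdy S.F 1 p * pdy (S.mup 1) s p)) * e2

lemma dmupv (hp : p ∈ S.A) (i s : Fin 2) :
    pdy (S.mup i) s p
      = -(S.mlow s p / S.F p) * S.ellUp i p
        - S.eps * S.Iscal p * (S.mlow s p / S.F p) * S.mup i p := by
  have hK0 := Kdelta S hp i 0
  have hK1 := Kdelta S hp i 1
  have ha := dmell S hp s
  have hb := dmmB S hp s
  have hδ : pdy (S.mup i) s p
      = (if i = 0 then (1:ℝ) else 0) * pdy (S.mup 0) s p
        + (if i = 1 then (1:ℝ) else 0) * pdy (S.mup 1) s p := by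
    fin_cases i <;> simp
  rw [hδ, ← hK0, ← hK1]
  linear_combination (S.ellUp i p) * ha + (S.eps * S.mup i p) * hb

lemma mstar (hp : p ∈ S.A) (i : Fin 2) :
    S.mup 0 p * pdy (S.mup i) 0 p + S.mup 1 p * pdy (S.mup i) 1 p
      = -(S.eps * S.ellUp i p + S.Iscal p * S.mup i p) / S.F p := by
  rw [dmupv S hp i 0, dmupv S hp i 1]
  have e4 := mm2 S hp
  have e5 := epsSq S
  linear_combination (-(S.ellUp i p / S.F p) - S.eps * S.Iscal p * S.mup i p / S.F p) * e4
    + (-(S.Iscal p * S.mup i p / S.F p)) * e5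

lemma vd2_apply (f : Pt → ℝ) (q : Pt) :
    S.vd2 f q = S.eps * S.F q * (pdy f 0 q * S.mup 0 q + pdy f 1 q * S.mup 1 q) := by
  simp [PFSurf.vd2, Fin.sum_univ_two]

lemma cvd2 {f : Pt → ℝ} (hf : ContDiffAt ℝ (⊤ : ℕ∞) f p) (hp : p ∈ S.A) :
    ContDiffAt ℝ (⊤ : ℕ∞) (S.vd2 f) p := by
  have hfun : S.vd2 f = fun q => S.eps * S.F q *
      (pdy f 0 q * S.mup 0 q + pdy f 1 q * S.mup 1 q) := by
    funext q; exact vd2_apply S f q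
  rw [hfun]
  exact (contDiffAt_const.mul (cF S hp)).mul
    (((contDiffAt_pdy hf 0).mul (cmu S 0 hp)).add ((contDiffAt_pdy hf 1).mul (cmu S 1 hp)))

lemma dvd2 {f : Pt → ℝ} (hf : ContDiffAt ℝ (⊤ : ℕ∞) f p) (hp : p ∈ S.A) :
    DifferentiableAt ℝ (S.vd2 f) p := (cvd2 S hf hp).differentiableAt (by simp)

lemma pdy_vd2 {f : Pt → ℝ} (hf : ContDiffAt ℝ (⊤ : ℕ∞) f p) (hp : p ∈ S.A) (s : Fin 2) :
    pdy (S.vd2 f) s p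
      = S.eps * (S.F p * ((pdy f 0 p * pdy (S.mup 0) s p + S.mup 0 p * pdy (pdy f 0) s p)
            + (pdy f 1 p * pdy (S.mup 1) s p + S.mup 1 p * pdy (pdy f 1) s p))
          + (pdy f 0 p * S.mup 0 p + pdy f 1 p * S.mup 1 p) * pdy S.F s p) := by
  have hfun : S.vd2 f = fun q => S.eps * (S.F q *
      (pdy f 0 q * S.mup 0 q + pdy f 1 q * S.mup 1 q)) := by
    funext q; rw [vd2_apply]; ring
  have d0 : DifferentiableAt ℝ (fun q => pdy f 0 q * S.mup 0 q) p :=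
    ((contDiffAt_pdy hf 0).differentiableAt (by simp)).mul (dmu S 0 hp)
  have d1 : DifferentiableAt ℝ (fun q => pdy f 1 q * S.mup 1 q) p :=
    ((contDiffAt_pdy hf 1).differentiableAt (by simp)).mul (dmu S 1 hp)
  rw [hfun, pdy_const_mul _ ((dF S hp).fun_mul (d0.fun_add d1)),
      pdy_mul (dF S hp) (d0.fun_add d1), pdy_add d0 d1,
      pdy_mul ((contDiffAt_pdy hf 0).differentiableAt (by simp)) (dmu S 0 hp),
      pdy_mul ((contDiffAt_pdy hf 1).differentiableAt (by simp)) (dmu S 1 hp)]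
  try ring

lemma star (hp : p ∈ S.A) {φ : Pt → ℝ} (hφ : ContDiffAt ℝ (⊤ : ℕ∞) φ p)
    (hom : ∀ q ∈ S.A, ∀ t : ℝ, 0 < t → φ (q.1, t • q.2) = φ q) :
    S.vd2 (S.vd2 φ) p
      = (S.F p)^2 * (∑ i, ∑ j, pdy (pdy φ j) i p * S.mup i p * S.mup j p)
        - S.eps * S.Iscal p * S.vd2 φ p := by
  have hF := S.Fne p hp
  have e2 := ellm2 S hp
  have e4 := mm2 S hp
  have e5 := epsSq S
  have heu := eulerPhi S hp (hφ.differentiableAt (by simp)) hom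
  have hu : S.F p * (S.F p)⁻¹ = 1 := mul_inv_cancel₀ hF
  rw [vd2_apply S (S.vd2 φ) p, pdy_vd2 S hφ hp 0, pdy_vd2 S hφ hp 1,
      dmupv S hp 0 0, dmupv S hp 0 1, dmupv S hp 1 0, dmupv S hp 1 1,
      vd2_apply S φ p]
  simp only [Fin.sum_univ_two, PFSurf.ellUp]
  set T := pdy φ 0 p * S.mup 0 p + pdy φ 1 p * S.mup 1 p with hT
  set M := S.mup 0 p * S.mlow 0 p + S.mup 1 p * S.mlow 1 p with hM
  set W := pdy (pdy φ 0) 0 p * S.mup 0 p * S.mup 0 p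
    + pdy (pdy φ 0) 1 p * S.mup 1 p * S.mup 0 p
    + pdy (pdy φ 1) 0 p * S.mup 0 p * S.mup 1 p
    + pdy (pdy φ 1) 1 p * S.mup 1 p * S.mup 1 p with hW
  linear_combination ((S.F p)^2 * W - S.eps * S.eps * S.Iscal p * S.F p * T) * e5
    + (-(S.eps * S.eps) * (S.F p * (S.F p)⁻¹) * (S.F p * (S.F p)⁻¹) * M) * heu
    + (-(S.eps * S.eps * S.eps) * S.Iscal p * S.F p * (S.F p * (S.F p)⁻¹) * T) * e4
    + (-(S.eps * S.eps * S.eps * S.eps) * S.Iscal p * S.F p * T) * hu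
    + (S.eps * S.eps * S.F p * T) * e2
end Fr

namespace Fr
open Tools

variable (S : PFSurf) {p : Pt}

lemma Dne (C : AnisoChange S) (hp : p ∈ S.A) :
    C.sigma p + S.eps - (S.vd2 C.phi p)^2 ≠ 0 := by
  have hreg := C.reg p hp
  have hφ : ContDiffAt ℝ (⊤ : ℕ∞) C.phi p := C.smphi.contDiffAt (S.openA.mem_nhds hp)
  have hstar := star S hp hφ C.homphi
  have e5 := epsSq S
  have key : (S.F p)^2 * (∑ i, ∑ j, (pdy (pdy C.phi j) i p + pdy C.phi i p * pdy C.phi j p)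
      * S.mup i p * S.mup j p) + S.eps
      = C.sigma p + S.eps - (S.vd2 C.phi p)^2 := by
    simp only [AnisoChange.sigma]
    rw [hstar, vd2_apply S C.phi p]
    simp only [Fin.sum_univ_two]
    linear_combination (-((S.F p)^2 * (pdy C.phi 0 p * S.mup 0 p + pdy C.phi 1 p * S.mup 1 p)^2)) * e5
  intro h0
  rw [← key] at h0
  exact hreg h0

lemma keyB (C : AnisoChange S) (HS : ∀ q ∈ S.A, C.sigma q = (S.vd2 C.phi q)^2)
    (HI : ∀ q ∈ S.A, S.vd2 S.Iscal q = 0) (hp : p ∈ S.A) :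
    S.vd2 C.Ibar p = 2 * S.eps * S.vd2 (S.vd2 C.phi) p := by
  have e5 := epsSq S
  have hφ : ∀ q ∈ S.A, ContDiffAt ℝ (⊤ : ℕ∞) C.phi q := fun q hq =>
    C.smphi.contDiffAt (S.openA.mem_nhds hq)
  have hρ : ∀ q ∈ S.A, C.rho q = S.eps := by
    intro q hq
    simp only [AnisoChange.rho]
    rw [HS q hq]
    have h2 : (S.vd2 C.phi q)^2 + S.eps - (S.vd2 C.phi q)^2 = S.eps := by ring
    rw [h2]
    rcases S.epspm with h|h <;> rw [h] <;> norm_num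
  have hlog : ∀ q ∈ S.A, S.vd2 (fun r => Real.log (C.rho r)) q = 0 := by
    intro q hq
    have hz : ∀ i : Fin 2, pdy (fun r => Real.log (C.rho r)) i q = 0 := by
      intro i
      rw [pdy_congr_set S.openA hq (g := fun _ => Real.log S.eps)
        (fun r hr => by rw [hρ r hr])]
      exact pdy_const _
    rw [vd2_apply, hz 0, hz 1]; ring
  have hIb : ∀ q ∈ S.A, C.Ibar q = S.Iscal q + 2 * S.eps * S.vd2 C.phi q := by
    intro q hq
    simp only [AnisoChange.Ibar]
    rw [hρ q hq, hlog q hq, e5, Real.sqrt_one]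
    ring
  have dφ₂ : DifferentiableAt ℝ (S.vd2 C.phi) p := dvd2 S (hφ p hp) hp
  have hps : ∀ i : Fin 2, pdy C.Ibar i p
      = pdy S.Iscal i p + 2 * S.eps * pdy (S.vd2 C.phi) i p := by
    intro i
    rw [pdy_congr_set S.openA hp (g := fun q => S.Iscal q + 2 * S.eps * S.vd2 C.phi q) hIb,
        pdy_add (dI S hp) (dφ₂.const_mul _), pdy_const_mul _ dφ₂]
  have hI0 := HI p hp
  rw [vd2_apply S S.Iscal p] at hI0
  rw [vd2_apply S C.Ibar p, hps 0, hps 1, vd2_apply S (S.vd2 C.phi) p]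
  linear_combination hI0

lemma keyA (C : AnisoChange S) (Hφ : ∀ q ∈ S.A, ∀ i, pdy (S.vd2 C.phi) i q = 0)
    (HI : ∀ q ∈ S.A, S.vd2 S.Iscal q = 0) (hp : p ∈ S.A) :
    S.vd2 C.Ibar p = 0 := by
  have hφ : ∀ q ∈ S.A, ContDiffAt ℝ (⊤ : ℕ∞) C.phi q := fun q hq =>
    C.smphi.contDiffAt (S.openA.mem_nhds hq)
  have hvv : ∀ q ∈ S.A, S.vd2 (S.vd2 C.phi) q = 0 := fun q hq => by
    rw [vd2_apply, Hφ q hq 0, Hφ q hq 1]; ring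
  set E : Pt → ℝ := fun q => S.eps * S.Iscal q * S.vd2 C.phi q + (S.vd2 C.phi q)^2 + S.eps
    with hE
  have hEeq : ∀ q ∈ S.A, C.sigma q + S.eps - (S.vd2 C.phi q)^2 = E q := fun q hq => by
    simp only [AnisoChange.sigma, hE]
    rw [hvv q hq]
    ring
  have hEne : ∀ q ∈ S.A, E q ≠ 0 := fun q hq => by
    rw [← hEeq q hq]; exact Dne S C hq
  have hρ : ∀ q ∈ S.A, C.rho q = (E q)⁻¹ := fun q hq => by
    simp only [AnisoChange.rho]
    rw [hEeq q hq, one_div]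
  have dφ₂ : ∀ q ∈ S.A, DifferentiableAt ℝ (S.vd2 C.phi) q := fun q hq =>
    dvd2 S (hφ q hq) hq
  have dE : ∀ q ∈ S.A, DifferentiableAt ℝ E q := fun q hq => by
    simp only [hE]
    exact ((((differentiableAt_const _).mul (dI S hq)).mul (dφ₂ q hq)).add
      ((dφ₂ q hq).pow 2)).add (differentiableAt_const _)
  have pdyE : ∀ q ∈ S.A, ∀ i : Fin 2, pdy E i q
      = S.eps * S.vd2 C.phi q * pdy S.Iscal i q := by
    intro q hq i
    simp only [hE]
    rw [pdy_add ((((differentiableAt_const _).fun_mul (dI S hq)).fun_mul (dφ₂ q hq)).fun_add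
          ((dφ₂ q hq).fun_pow 2)) (differentiableAt_const _),
        pdy_add (((differentiableAt_const _).fun_mul (dI S hq)).fun_mul (dφ₂ q hq))
          ((dφ₂ q hq).fun_pow 2),
        pdy_const, pdy_sq (dφ₂ q hq),
        pdy_mul ((differentiableAt_const _).fun_mul (dI S hq)) (dφ₂ q hq),
        pdy_const_mul _ (dI S hq), Hφ q hq i]
    ring
  have dEinv : ∀ q ∈ S.A, DifferentiableAt ℝ (fun r => (E r)⁻¹) q := fun q hq =>
    (dE q hq).inv (hEne q hq)
  have hlog : ∀ q ∈ S.A, S.vd2 (fun r => Real.log (C.rho r)) q = 0 := by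
    intro q hq
    have hz : ∀ i : Fin 2, pdy (fun r => Real.log (C.rho r)) i q
        = ((E q)⁻¹)⁻¹ * (-((E q)^2)⁻¹ * (S.eps * S.vd2 C.phi q * pdy S.Iscal i q)) := by
      intro i
      rw [pdy_congr_set S.openA hq (g := fun r => Real.log ((E r)⁻¹))
          (fun r hr => by rw [hρ r hr]),
        pdy_log (dEinv q hq) (inv_ne_zero (hEne q hq)),
        pdy_inv (dE q hq) (hEne q hq), pdyE q hq i]
    have hI0 := HI q hq
    rw [vd2_apply] at hI0
    rw [vd2_apply, hz 0, hz 1]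
    linear_combination (((E q)⁻¹)⁻¹ * (-((E q)^2)⁻¹ * (S.eps * S.vd2 C.phi q))) * hI0
  have hIb : ∀ q ∈ S.A, C.Ibar q
      = Real.sqrt (S.eps * (E q)⁻¹) * (S.Iscal q + 2 * S.eps * S.vd2 C.phi q) := by
    intro q hq
    simp only [AnisoChange.Ibar]
    rw [hρ q hq, hlog q hq]
    ring
  rcases lt_trichotomy (S.eps * (E p)⁻¹) 0 with hc|hc|hc
  · have hcont : ContinuousAt (fun q => S.eps * (E q)⁻¹) p :=
      continuousAt_const.mul (dEinv p hp).continuousAt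
    have hev1 : ∀ᶠ q in nhds p, S.eps * (E q)⁻¹ < 0 :=
      Filter.Tendsto.eventually_lt_const hc hcont
    have hev2 : ∀ᶠ q in nhds p, q ∈ S.A := S.openA.mem_nhds hp
    have hIb0 : C.Ibar =ᶠ[nhds p] fun _ => (0:ℝ) := by
      filter_upwards [hev1, hev2] with q h1 h2
      rw [hIb q h2, Real.sqrt_eq_zero'.mpr h1.le, zero_mul]
    have hz : ∀ i : Fin 2, pdy C.Ibar i p = 0 := by
      intro i
      have h := hIb0.fderiv_eq (𝕜 := ℝ)
      simp only [pdy, h]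
      simp
    rw [vd2_apply, hz 0, hz 1]; ring
  · exfalso
    exact (mul_ne_zero (epsNe S) (inv_ne_zero (hEne p hp))) hc
  · have hg : DifferentiableAt ℝ (fun q => S.eps * (E q)⁻¹) p := (dEinv p hp).const_mul _
    have hsq : DifferentiableAt ℝ (fun q => Real.sqrt (S.eps * (E q)⁻¹)) p :=
      ((hasDerivAt_sqrt (ne_of_gt hc)).comp_hasFDerivAt p hg.hasFDerivAt).differentiableAt
    have hlin : DifferentiableAt ℝ (fun q => S.Iscal q + 2 * S.eps * S.vd2 C.phi q) p :=
      (dI S hp).add ((dφ₂ p hp).const_mul _)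
    have hsval : ∀ i : Fin 2, pdy (fun q => Real.sqrt (S.eps * (E q)⁻¹)) i p
        = (1 / (2 * Real.sqrt (S.eps * (E p)⁻¹)))
          * (S.eps * (-((E p)^2)⁻¹ * (S.eps * S.vd2 C.phi p * pdy S.Iscal i p))) := by
      intro i
      rw [pdy_sqrt hg (ne_of_gt hc), pdy_const_mul _ (dEinv p hp),
          pdy_inv (dE p hp) (hEne p hp), pdyE p hp i]
    have hlval : ∀ i : Fin 2, pdy (fun q => S.Iscal q + 2 * S.eps * S.vd2 C.phi q) i p
        = pdy S.Iscal i p := by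
      intro i
      rw [pdy_add (dI S hp) ((dφ₂ p hp).const_mul _), pdy_const_mul _ (dφ₂ p hp), Hφ p hp i]
      ring
    have hvI : ∀ i : Fin 2, pdy C.Ibar i p
        = ((1 / (2 * Real.sqrt (S.eps * (E p)⁻¹)))
            * (S.eps * (-((E p)^2)⁻¹ * (S.eps * S.vd2 C.phi p)))
            * (S.Iscal p + 2 * S.eps * S.vd2 C.phi p)
          + Real.sqrt (S.eps * (E p)⁻¹)) * pdy S.Iscal i p := by
      intro i
      rw [pdy_congr_set S.openA hp hIb, pdy_mul hsq hlin, hsval i, hlval i]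
      ring
    have hI0 := HI p hp
    rw [vd2_apply] at hI0
    rw [vd2_apply, hvI 0, hvI 1]
    linear_combination ((1 / (2 * Real.sqrt (S.eps * (E p)⁻¹)))
            * (S.eps * (-((E p)^2)⁻¹ * (S.eps * S.vd2 C.phi p)))
            * (S.Iscal p + 2 * S.eps * S.vd2 C.phi p)
          + Real.sqrt (S.eps * (E p)⁻¹)) * hI0

end Fr

/-- (a) If `φ_{;2}` depends only on the base point (its
`y`-derivatives vanish) and `F` satisfies the T-condition (`I_{;2} = 0`), then
`F̄` satisfies the T-condition (`Ī_{;2} = 0`). (b) If `σ = (φ_{;2})²`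
(equivalently `det ḡ = e^{4φ} det g`) and `F` satisfies the T-condition, then
`F̄` satisfies the T-condition iff `φ_{;2;2} = 0`. -/
theorem statement10 (S : PFSurf) (C : AnisoChange S) :
    ((∀ p ∈ S.A, ∀ i, pdy (S.vd2 C.phi) i p = 0) →
      (∀ p ∈ S.A, S.vd2 S.Iscal p = 0) →
      (∀ p ∈ S.A, S.vd2 C.Ibar p = 0)) ∧
    ((∀ p ∈ S.A, C.sigma p = (S.vd2 C.phi p)^2) →
      (∀ p ∈ S.A, S.vd2 S.Iscal p = 0) →
      ((∀ p ∈ S.A, S.vd2 C.Ibar p = 0) ↔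
        (∀ p ∈ S.A, S.vd2 (S.vd2 C.phi) p = 0))) := by
  constructor
  · intro Hp HI p hp
    exact Fr.keyA S C Hp HI hp
  · intro HS HI
    constructor
    · intro hIb p hp
      have h := Fr.keyB S C HS HI hp
      rw [hIb p hp] at h
      have he := Fr.epsNe S
      have h2 : S.eps * S.vd2 (S.vd2 C.phi) p = 0 := by linear_combination (-1/2 : ℝ) * h
      rcases mul_eq_zero.mp h2 with h3|h3
      · exact absurd h3 he
      · exact h3
    · intro hp2 p hp
      rw [Fr.keyB S C HS HI hp, hp2 p hp]
      ring
end
end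

section
/- Let F be a conic pseudo-Finsler surface metric that is anisotropically conformally flat under F̄ = e^{φ}F (i.e. F·∂φ/∂x^j + ∂F/∂x^j = 0 for all j). If F²φ_{,1} + y^k ∂F/∂x^k = 0, then either F is projectively flat (G^k m_k = 0) or φ_{;2} = 0 (φ is an isotropic function) on each point of A. -/
/-!
Common framework: conic pseudo-Finsler surfaces on an open conic subset
`A ⊆ M × (ℝ² ∖ {0})`, with modified Berwald frame, scalar derivatives,
and anisotropic conformal change `F̄ = e^φ F`.
-/

noncomputable section

open Real

lemma euler_aux {A : Set Pt} (hA : IsOpen A) {f : Pt → ℝ} (hf : ContDiffOn ℝ (⊤ : ℕ∞) f A)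
    {p : Pt} (hp : p ∈ A) (k : ℕ)
    (hhom : ∀ t : ℝ, 0 < t → f (p.1, t • p.2) = t ^ k * f p) :
    p.2 0 * pdy f 0 p + p.2 1 * pdy f 1 p = (k : ℝ) * f p := by
  have hdiff : DifferentiableAt ℝ f p :=
    (hf.differentiableOn (by simp)).differentiableAt (hA.mem_nhds hp)
  set v : Pt := ((0 : Fin 2 → ℝ), p.2) with hv
  have hc : HasDerivAt (fun t : ℝ => ((p.1, t • p.2) : Pt)) v 1 := by
    have h1 : HasDerivAt (fun t : ℝ => t • v) v 1 := by
      simpa using (hasDerivAt_id (1 : ℝ)).smul_const v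
    have h2 := h1.const_add ((p.1, (0 : Fin 2 → ℝ)) : Pt)
    have heq : (fun t : ℝ => ((p.1, t • p.2) : Pt))
        = fun t : ℝ => ((p.1, (0 : Fin 2 → ℝ)) : Pt) + t • v := by
      funext t
      simp [hv, Prod.ext_iff]
    rw [heq]; exact h2
  have hfd : HasFDerivAt f (fderiv ℝ f p) ((fun t : ℝ => ((p.1, t • p.2) : Pt)) 1) := by
    have : ((p.1, (1:ℝ) • p.2) : Pt) = p := by simp
    simpa [this] using hdiff.hasFDerivAt
  have hcomp : HasDerivAt (fun t : ℝ => f (p.1, t • p.2)) (fderiv ℝ f p v) 1 := by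
    exact hfd.comp_hasDerivAt 1 hc
  have hev : (fun t : ℝ => f (p.1, t • p.2)) =ᶠ[nhds (1:ℝ)] fun t => t ^ k * f p := by
    filter_upwards [isOpen_Ioi.mem_nhds (zero_lt_one)] with t ht
    exact hhom t ht
  have hcomp2 : HasDerivAt (fun t : ℝ => t ^ k * f p) (fderiv ℝ f p v) 1 :=
    hcomp.congr_of_eventuallyEq hev.symm
  have hpow : HasDerivAt (fun t : ℝ => t ^ k * f p) ((k : ℝ) * f p) 1 := by
    simpa using (hasDerivAt_pow k (1 : ℝ)).mul_const (f p)
  have hder : fderiv ℝ f p v = (k : ℝ) * f p := hcomp2.unique hpow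
  have hvdec : v = p.2 0 • (((0 : Fin 2 → ℝ), Pi.single 0 1) : Pt)
      + p.2 1 • (((0 : Fin 2 → ℝ), Pi.single 1 1) : Pt) := by
    refine Prod.ext (by simp [hv]) ?_
    funext i
    fin_cases i <;> simp [hv]
  rw [hvdec, map_add, map_smul, map_smul] at hder
  simpa [pdy, smul_eq_mul] using hder

/-- If `F` is anisotropically conformally flat
(`F·∂φ/∂x^j + ∂F/∂x^j = 0`) and `F²φ_{,1} + y^k∂F/∂x^k = 0`, then at each
point of `A` either `G^k m_k = 0` (`F` is projectively flat) or `φ_{;2} = 0`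
(`φ` is an isotropic function). -/
theorem statement17 (S : PFSurf) (C : AnisoChange S)
    (hflat : ∀ p ∈ S.A, ∀ j, S.F p * pdx C.phi j p + pdx S.F j p = 0)
    (hextra : ∀ p ∈ S.A,
      (S.F p)^2 * S.hd1 C.phi p + (∑ k, p.2 k * pdx S.F k p) = 0) :
    ∀ p ∈ S.A, (∑ k, S.Gs k p * S.mlow k p) = 0 ∨ S.vd2 C.phi p = 0  := by
  intro p hp
  have hFne : S.F p ≠ 0 := S.Fne p hp
  -- y ≠ 0
  have hy : p.2 ≠ 0 := by
    intro h0
    have h2 := S.homF p hp 2 (by norm_num)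
    rw [h0] at h2
    simp at h2
    have : ((p.1, (0 : Fin 2 → ℝ)) : Pt) = p := by
      rw [← h0]
    rw [this] at h2
    have : S.F p = 0 := by linarith
    exact hFne this
  -- Euler for φ (degree 0)
  have eulphi : p.2 0 * pdy C.phi 0 p + p.2 1 * pdy C.phi 1 p = 0 := by
    have h := euler_aux S.openA C.smphi hp 0
      (fun t ht => by simpa using C.homphi p hp t ht)
    simpa using h
  -- Euler for G^j (degree 2)
  have eulG : ∀ j, p.2 0 * pdy (S.Gs j) 0 p + p.2 1 * pdy (S.Gs j) 1 p
      = 2 * S.Gs j p := by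
    intro j
    have h := euler_aux S.openA (S.smG j) hp 2 (fun t ht => S.homG p hp t ht j)
    simpa using h
  -- y · m_low = 0
  have hym : p.2 0 * S.mlow 0 p + p.2 1 * S.mlow 1 p = 0 := by
    have h := S.ellm p hp
    simp only [Fin.sum_univ_two] at h
    field_simp at h
    linarith [h]
  -- G · ∂φ/∂y = 0
  have key : S.Gs 0 p * pdy C.phi 0 p + S.Gs 1 p * pdy C.phi 1 p = 0 := by
    have hex := hextra p hp
    have h0 := hflat p hp 0
    have h1 := hflat p hp 1
    have e0 := eulG 0
    have e1 := eulG 1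
    simp only [PFSurf.hd1, PFSurf.hdel, PFSurf.ellUp, Fin.sum_univ_two] at hex
    field_simp at hex
    have h2F : 2 * S.F p ^ 2 * (S.Gs 0 p * pdy C.phi 0 p + S.Gs 1 p * pdy C.phi 1 p)
        = 0 := by
      linear_combination (-S.F p) * hex + S.F p * p.2 0 * h0 + S.F p * p.2 1 * h1
        - S.F p ^ 2 * pdy C.phi 0 p * e0 - S.F p ^ 2 * pdy C.phi 1 p * e1
    have hne : 2 * S.F p ^ 2 ≠ 0 := mul_ne_zero two_ne_zero (pow_ne_zero 2 hFne)
    exact (mul_eq_zero.mp h2F).resolve_left hne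
  -- cross(∂φ, m_low) = 0
  have crossum : pdy C.phi 0 p * S.mlow 1 p - pdy C.phi 1 p * S.mlow 0 p = 0 := by
    have hyi : p.2 0 ≠ 0 ∨ p.2 1 ≠ 0 := by
      by_contra h
      push_neg at h
      apply hy
      funext i
      fin_cases i
      · exact h.1
      · exact h.2
    rcases hyi with h | h
    · have : (pdy C.phi 0 p * S.mlow 1 p - pdy C.phi 1 p * S.mlow 0 p) * p.2 0
          = 0 := by
        linear_combination S.mlow 1 p * eulphi - pdy C.phi 1 p * hym
      exact (mul_eq_zero.mp this).resolve_right h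
    · have : (pdy C.phi 0 p * S.mlow 1 p - pdy C.phi 1 p * S.mlow 0 p) * p.2 1
          = 0 := by
        linear_combination (- S.mlow 0 p) * eulphi + pdy C.phi 0 p * hym
      exact (mul_eq_zero.mp this).resolve_right h
  -- main product identity
  have main : (S.Gs 0 p * S.mlow 0 p + S.Gs 1 p * S.mlow 1 p)
      * (pdy C.phi 0 p * S.mup 0 p + pdy C.phi 1 p * S.mup 1 p) = 0 := by
    linear_combination (S.mlow 0 p * S.mup 0 p + S.mlow 1 p * S.mup 1 p) * key
      - (S.Gs 0 p * S.mup 1 p - S.Gs 1 p * S.mup 0 p) * crossum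
  rcases mul_eq_zero.mp main with h | h
  · left
    simpa [Fin.sum_univ_two] using h
  · right
    simp only [PFSurf.vd2, Fin.sum_univ_two, h, mul_zero]
end
end
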